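/- arXiv:2005.00379 — 10 statements merged into one kernel-verified Lean document; each statement's English description precedes it below -/
import Mathlib

section
/- Let m, n ≥ 2 and let A be a 12-avoiding m×n (0,1)-matrix with exactly m + n − 1 ones. Then the set of positions of the 1's of A is a complete R-L zigzag path; that is, A(1,n) = A(m,1) = 1 and every position (i,j) with A(i,j) = 1 and (i,j) ≠ (m,1) satisfies exactly one of A(i,j−1) = 1 and A(i+1,j) = 1. -/
/-!
Number the antidiagonals of the `m × n` array by `i + n - j`, from `1` at `(1, n)` to
`m + n - 1` at `(m, 1)`. Two 1's of a 12-avoiding matrix never lie on the same antidiagonal,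
since one of them would be strictly above and to the left of the other. With exactly
`m + n - 1` ones, every antidiagonal therefore carries exactly one 1. The 1 on the antidiagonal
following that of a 1 at `(i, j)` must then be at `(i, j - 1)` or `(i + 1, j)`, every other
position of that antidiagonal forming a 12-pattern with `(i, j)`; and `(i, j - 1)`, `(i + 1, j)`
form a 12-pattern themselves, so they cannot both be 1's.
-/

/-- Number of 1's of an `m × n` (0,1)-matrix `A` (1-indexed entries). -/
def onesCount (m n : ℕ) (A : ℕ → ℕ → Bool) : ℕ :=
  (((Finset.Icc 1 m) ×ˢ (Finset.Icc 1 n)).filter fun p => A p.1 p.2 = true).card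

/-- `A` is 12-avoiding: no rows `i₁ < i₂` and columns `j₁ < j₂` with
`A i₁ j₁ = A i₂ j₂ = 1`. -/
def Avoid12 (m n : ℕ) (A : ℕ → ℕ → Bool) : Prop :=
  ¬ ∃ i₁ i₂ j₁ j₂ : ℕ, 1 ≤ i₁ ∧ i₁ < i₂ ∧ i₂ ≤ m ∧ 1 ≤ j₁ ∧ j₁ < j₂ ∧ j₂ ≤ n ∧
    A i₁ j₁ = true ∧ A i₂ j₂ = true

open Finset

def onesSet (m n : ℕ) (A : ℕ → ℕ → Bool) : Finset (ℕ × ℕ) :=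
  ((Icc 1 m) ×ˢ (Icc 1 n)).filter fun p => A p.1 p.2 = true

def antidiag (n : ℕ) (p : ℕ × ℕ) : ℕ := p.1 + n - p.2

section

variable {m n : ℕ} {A : ℕ → ℕ → Bool}

lemma card_onesSet : (onesSet m n A).card = onesCount m n A := rfl

lemma mem_onesSet {p : ℕ × ℕ} :
    p ∈ onesSet m n A ↔ 1 ≤ p.1 ∧ p.1 ≤ m ∧ 1 ≤ p.2 ∧ p.2 ≤ n ∧ A p.1 p.2 = true := by
  simp only [onesSet, mem_filter, mem_product, mem_Icc, and_assoc]

lemma antidiag_mem_Icc {p : ℕ × ℕ} (hp : p ∈ onesSet m n A) :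
    antidiag n p ∈ Icc 1 (m + n - 1) := by
  rw [mem_onesSet] at hp
  rw [mem_Icc, antidiag]
  omega

lemma Avoid12.not_left_and_below (hA : Avoid12 m n A) {i j : ℕ} (hi : 1 ≤ i) (hj : 2 ≤ j)
    (hjn : j ≤ n) (him : i + 1 ≤ m) : ¬ (A i (j - 1) = true ∧ A (i + 1) j = true) :=
  fun ⟨hleft, hbelow⟩ => hA ⟨i, i + 1, j - 1, j, hi, by omega, him, by omega, by omega, hjn,
    hleft, hbelow⟩

lemma Avoid12.injOn_antidiag (hA : Avoid12 m n A) : Set.InjOn (antidiag n) (onesSet m n A) := by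
  rintro ⟨a, b⟩ hp ⟨c, d⟩ hq h
  rw [mem_coe, mem_onesSet] at hp hq
  simp only [antidiag] at h hp hq
  rcases lt_trichotomy a c with hac | rfl | hca
  · exact absurd ⟨a, c, b, d, hp.1, hac, hq.2.1, hp.2.2.1, by omega, hq.2.2.2.1, hp.2.2.2.2,
      hq.2.2.2.2⟩ hA
  · rw [Prod.mk.injEq]
    omega
  · exact absurd ⟨c, a, d, b, hq.1, hca, hp.2.1, hq.2.2.1, by omega, hp.2.2.2.1, hq.2.2.2.2,
      hp.2.2.2.2⟩ hA

lemma Avoid12.image_antidiag (hA : Avoid12 m n A) (hcard : onesCount m n A = m + n - 1) :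
    (onesSet m n A).image (antidiag n) = Icc 1 (m + n - 1) := by
  refine eq_of_subset_of_card_le (fun k hk => ?_) ?_
  · obtain ⟨p, hp, rfl⟩ := mem_image.1 hk
    exact antidiag_mem_Icc hp
  · rw [card_image_of_injOn hA.injOn_antidiag, card_onesSet, hcard, Nat.card_Icc]
    omega

lemma Avoid12.exists_mem_onesSet_antidiag_eq (hA : Avoid12 m n A)
    (hcard : onesCount m n A = m + n - 1) {k : ℕ} (hk : k ∈ Icc 1 (m + n - 1)) :
    ∃ p ∈ onesSet m n A, antidiag n p = k :=
  mem_image.1 (hA.image_antidiag hcard ▸ hk)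

lemma Avoid12.apply_top_right (hA : Avoid12 m n A) (hcard : onesCount m n A = m + n - 1)
    (hmn : 2 ≤ m + n) : A 1 n = true := by
  obtain ⟨⟨i, j⟩, hp, hk⟩ := hA.exists_mem_onesSet_antidiag_eq hcard (k := 1)
    (mem_Icc.2 ⟨le_rfl, by omega⟩)
  rw [mem_onesSet] at hp
  simp only [antidiag] at hp hk
  obtain ⟨rfl, rfl⟩ : i = 1 ∧ j = n := by omega
  exact hp.2.2.2.2

lemma Avoid12.apply_bottom_left (hA : Avoid12 m n A) (hcard : onesCount m n A = m + n - 1)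
    (hmn : 2 ≤ m + n) : A m 1 = true := by
  obtain ⟨⟨i, j⟩, hp, hk⟩ := hA.exists_mem_onesSet_antidiag_eq hcard (k := m + n - 1)
    (mem_Icc.2 ⟨by omega, le_rfl⟩)
  rw [mem_onesSet] at hp
  simp only [antidiag] at hp hk
  obtain ⟨rfl, rfl⟩ : i = m ∧ j = 1 := by omega
  exact hp.2.2.2.2

lemma Avoid12.left_or_below (hA : Avoid12 m n A) (hcard : onesCount m n A = m + n - 1)
    {i j : ℕ} (hij : (i, j) ∈ onesSet m n A) (hne : (i, j) ≠ (m, 1)) :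
    (2 ≤ j ∧ A i (j - 1) = true) ∨ (i + 1 ≤ m ∧ A (i + 1) j = true) := by
  have hne' : ¬ (i = m ∧ j = 1) := fun ⟨hi, hj⟩ => hne (by rw [hi, hj])
  rw [mem_onesSet] at hij
  obtain ⟨hi, him, hj, hjn, hAij⟩ := hij
  obtain ⟨⟨a, b⟩, hq, hk⟩ := hA.exists_mem_onesSet_antidiag_eq hcard
    (k := antidiag n (i, j) + 1) (by rw [mem_Icc, antidiag]; omega)
  rw [mem_onesSet] at hq
  obtain ⟨ha, ham, hb, hbn, hAab⟩ := hq
  simp only [antidiag] at hk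
  rcases lt_trichotomy a i with hai | rfl | hia
  · exact absurd ⟨a, i, b, j, ha, hai, him, hb, by omega, hjn, hAab, hAij⟩ hA
  · obtain rfl : b = j - 1 := by omega
    exact Or.inl ⟨by omega, hAab⟩
  · obtain rfl | hia' := eq_or_lt_of_le (Nat.succ_le_of_lt hia)
    · obtain rfl : b = j := by omega
      exact Or.inr ⟨ham, hAab⟩
    · exact absurd ⟨i, a, j, b, hi, hia, ham, hj, by omega, hbn, hAij, hAab⟩ hA

end

theorem stmt_2 (m n : ℕ) (hm : 2 ≤ m) (hn : 2 ≤ n) (A : ℕ → ℕ → Bool)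
    (hA : Avoid12 m n A) (hcard : onesCount m n A = m + n - 1) :
    A 1 n = true ∧ A m 1 = true ∧
    ∀ i j : ℕ, 1 ≤ i → i ≤ m → 1 ≤ j → j ≤ n → A i j = true → (i, j) ≠ (m, 1) →
      Xor' (2 ≤ j ∧ A i (j - 1) = true) (i + 1 ≤ m ∧ A (i + 1) j = true) := by
  refine ⟨hA.apply_top_right hcard (by omega), hA.apply_bottom_left hcard (by omega),
    fun i j hi him hj hjn hAij hne => ?_⟩
  refine (xor_iff_or_and_not_and _ _).2 ⟨hA.left_or_below hcard (mem_onesSet.2 ⟨hi, him, hj, hjn, hAij⟩) hne, ?_⟩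
  rintro ⟨⟨hj2, hleft⟩, him1, hbelow⟩
  exact hA.not_left_and_below hi hj2 hjn him1 ⟨hleft, hbelow⟩
end

section
/- Let 0 ≤ e₁ ≤ e₂ ≤ ⋯ ≤ e_m ≤ n and let A be a 12-avoiding m×n (0,1)-matrix such that A(i,j) = 0 whenever j > e_i (a 12-avoiding (0,1)-staircase matrix). Then the number of 1's of A is at most max{ e_i + m − i : 1 ≤ i ≤ m }. -/
/-!
The map sending the 1 in position `(i, j)` to `j + (m - i)`, the index of its antidiagonal, is
injective on the 1's of a 12-avoiding matrix: a 1 strictly below another lies weakly to its left,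
hence on a strictly smaller antidiagonal. In a staircase matrix a 1 in row `i` has `j ≤ e i`, so its
antidiagonal index lies in `[1, max (e i + m - i)]`.
-/

namespace Avoid12

variable {m n : ℕ} {A : ℕ → ℕ → Bool}

theorem snd_le_of_fst_lt (hA : Avoid12 m n A) {i₁ i₂ j₁ j₂ : ℕ}
    (hi₁ : 1 ≤ i₁) (hi : i₁ < i₂) (hi₂ : i₂ ≤ m) (hj₁ : 1 ≤ j₁) (hj₂ : j₂ ≤ n)
    (h₁ : A i₁ j₁ = true) (h₂ : A i₂ j₂ = true) : j₂ ≤ j₁ := by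
  by_contra! h
  exact hA ⟨i₁, i₂, j₁, j₂, hi₁, hi, hi₂, hj₁, h, hj₂, h₁, h₂⟩

theorem injOn_antidiagonalIndex (hA : Avoid12 m n A) :
    Set.InjOn (fun p : ℕ × ℕ => p.2 + (m - p.1))
      ((Finset.Icc 1 m ×ˢ Finset.Icc 1 n).filter fun p => A p.1 p.2 = true) := by
  rintro ⟨i₁, j₁⟩ hp ⟨i₂, j₂⟩ hq hij
  simp only [Finset.coe_filter, Finset.mem_product, Finset.mem_Icc, Set.mem_ofPred_eq] at hp hq hij
  obtain ⟨⟨⟨hi₁, hi₁m⟩, hj₁, hj₁n⟩, h₁⟩ := hp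
  obtain ⟨⟨⟨hi₂, hi₂m⟩, hj₂, hj₂n⟩, h₂⟩ := hq
  rcases lt_trichotomy i₁ i₂ with h | rfl | h
  · have := hA.snd_le_of_fst_lt hi₁ h hi₂m hj₁ hj₂n h₁ h₂
    omega
  · rw [Nat.add_right_cancel hij]
  · have := hA.snd_le_of_fst_lt hi₂ h hi₁m hj₂ hj₁n h₂ h₁
    omega

end Avoid12

theorem mapsTo_antidiagonalIndex_Icc {m n : ℕ} {e : ℕ → ℕ} {A : ℕ → ℕ → Bool}
    (hstair : ∀ i j : ℕ, 1 ≤ i → i ≤ m → e i < j → j ≤ n → A i j = false) :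
    Set.MapsTo (fun p : ℕ × ℕ => p.2 + (m - p.1))
      ((Finset.Icc 1 m ×ˢ Finset.Icc 1 n).filter fun p => A p.1 p.2 = true)
      (Finset.Icc 1 ((Finset.Icc 1 m).sup fun i => e i + (m - i))) := by
  rintro ⟨i, j⟩ hp
  simp only [Finset.coe_filter, Finset.mem_product, Finset.mem_Icc, Set.mem_ofPred_eq] at hp
  obtain ⟨⟨⟨hi, him⟩, hj, hjn⟩, h⟩ := hp
  have hje : j ≤ e i := by
    by_contra! hlt
    simp [hstair i j hi him hlt hjn] at h
  have hsup : e i + (m - i) ≤ (Finset.Icc 1 m).sup fun i => e i + (m - i) :=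
    Finset.le_sup (f := fun i => e i + (m - i)) (Finset.mem_Icc.mpr ⟨hi, him⟩)
  simp only [Finset.coe_Icc, Set.mem_Icc]
  omega

theorem stmt_3_general (m n : ℕ) (e : ℕ → ℕ)
    (A : ℕ → ℕ → Bool) (hA : Avoid12 m n A)
    (hstair : ∀ i j : ℕ, 1 ≤ i → i ≤ m → e i < j → j ≤ n → A i j = false) :
    onesCount m n A ≤ (Finset.Icc 1 m).sup (fun i => e i + (m - i)) := by
  calc onesCount m n A
      ≤ (Finset.Icc 1 ((Finset.Icc 1 m).sup fun i => e i + (m - i))).card :=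
        Finset.card_le_card_of_injOn _ (mapsTo_antidiagonalIndex_Icc hstair)
          hA.injOn_antidiagonalIndex
    _ = (Finset.Icc 1 m).sup (fun i => e i + (m - i)) := by simp

theorem stmt_3 (m n : ℕ) (hm : 1 ≤ m) (e : ℕ → ℕ)
    (he_mono : ∀ i : ℕ, 1 ≤ i → i < m → e i ≤ e (i + 1)) (he_n : e m ≤ n)
    (A : ℕ → ℕ → Bool) (hA : Avoid12 m n A)
    (hstair : ∀ i j : ℕ, 1 ≤ i → i ≤ m → e i < j → j ≤ n → A i j = false) :
    onesCount m n A ≤ (Finset.Icc 1 m).sup (fun i => e i + (m - i)) :=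
  stmt_3_general m n e A hA hstair
end

section
/- Let m, n, k be positive integers with m, n ≥ k ≥ 3. If A is a 12⋯k-avoiding m×n (0,1)-matrix, then the number of 1's of A is at most (k−1)(m + n − (k−1)). -/
/-- `A` is `12⋯k`-avoiding. -/
def AvoidId (m n k : ℕ) (A : ℕ → ℕ → Bool) : Prop :=
  ¬ ∃ r c : ℕ → ℕ,
    (∀ t, t + 1 < k → r t < r (t + 1) ∧ c t < c (t + 1)) ∧
    (∀ t, t < k → 1 ≤ r t ∧ r t ≤ m ∧ 1 ≤ c t ∧ c t ≤ n) ∧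
    (∀ t, t < k → A (r t) (c t) = true)

/-!
Give every one of `A` its height: the length of a longest chain of ones, strictly increasing in
rows and columns, ending at it. Avoidance of `12⋯k` means every height lies in `1, …, k - 1`.
Two ones of equal height `t` cannot be strictly comparable, so the `t`-th level is an antichain
lying in rows and columns `≥ t`; distinct points of such an antichain lie on distinct diagonals,
of which there are `m + n + 1 - 2t`. Summing over `t` gives `(k - 1)(m + n - (k - 1))`.
-/

open Finset

lemma strictMono_extend {f : ℕ → ℕ} (hf : StrictMono f) {t a : ℕ} (ht : 1 ≤ t)
    (ha : f (t - 1) < a) : StrictMono fun s => if s < t then f s else a + (s - t) := by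
  refine strictMono_nat_of_lt_succ fun s => ?_
  rcases lt_trichotomy (s + 1) t with h | h | h
  · simp only [if_pos h, if_pos (Nat.lt_of_succ_lt h)]
    exact hf s.lt_succ_self
  · have hs : s = t - 1 := by omega
    simp only [if_pos (show s < t by omega), if_neg (show ¬s + 1 < t by omega)]
    subst hs
    omega
  · simp only [if_neg (show ¬s < t by omega), if_neg (show ¬s + 1 < t by omega)]
    omega

/-- Ones of `A` at `(r 0, c 0), …, (r (t - 1), c (t - 1)) = (i, j)`; the index sequences are
strictly monotone on all of `ℕ`, not only below `t`, which costs nothing. -/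
def HasChain (A : ℕ → ℕ → Bool) (i j t : ℕ) : Prop :=
  ∃ r c : ℕ → ℕ, StrictMono r ∧ StrictMono c ∧
    (∀ s < t, 1 ≤ r s ∧ 1 ≤ c s ∧ A (r s) (c s) = true) ∧ r (t - 1) = i ∧ c (t - 1) = j

namespace HasChain

variable {A : ℕ → ℕ → Bool} {i j t : ℕ}

lemma one (hA : A i j = true) (hi : 1 ≤ i) (hj : 1 ≤ j) : HasChain A i j 1 :=
  ⟨(i + ·), (j + ·), fun _ _ h => Nat.add_lt_add_left h i, fun _ _ h => Nat.add_lt_add_left h j,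
    fun s hs => by simp [show s = 0 by omega, hi, hj, hA], by simp, by simp⟩

lemma snoc (h : HasChain A i j t) (ht : 1 ≤ t) {i' j' : ℕ} (hi : i < i') (hj : j < j')
    (hA : A i' j' = true) : HasChain A i' j' (t + 1) := by
  obtain ⟨r, c, hr, hc, hent, rfl, rfl⟩ := h
  refine ⟨_, _, strictMono_extend hr ht hi, strictMono_extend hc ht hj, fun s hs => ?_,
    by simp, by simp⟩
  by_cases hst : s < t
  · simpa only [if_pos hst] using hent s hst
  · simp only [if_neg hst]
    exact ⟨by omega, by omega, by rwa [show s - t = 0 by omega, add_zero, add_zero]⟩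

lemma le_fst_snd (h : HasChain A i j t) : t ≤ i ∧ t ≤ j := by
  obtain ⟨r, c, hr, hc, hent, rfl, rfl⟩ := h
  rcases Nat.eq_zero_or_pos t with rfl | ht
  · simp
  have h0 := hent 0 ht
  have hr' := hr.add_le_nat (t - 1) 0
  have hc' := hc.add_le_nat (t - 1) 0
  simp only [add_zero] at hr' hc'
  omega

lemma drop (h : HasChain A i j t) {s : ℕ} (hs : 1 ≤ s) (hst : s ≤ t) : HasChain A i j s := by
  obtain ⟨r, c, hr, hc, hent, rfl, rfl⟩ := h
  refine ⟨(r <| · + (t - s)), (c <| · + (t - s)), hr.comp (strictMono_id.add_const _),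
    hc.comp (strictMono_id.add_const _), fun u hu => hent _ (by omega), ?_, ?_⟩ <;>
  simp only [show s - 1 + (t - s) = t - 1 by omega]

end HasChain

lemma AvoidId.not_hasChain {m n k : ℕ} {A : ℕ → ℕ → Bool} (hA : AvoidId m n k A) (hk : 1 ≤ k)
    {i j : ℕ} (hi : i ≤ m) (hj : j ≤ n) : ¬HasChain A i j k := by
  rintro ⟨r, c, hr, hc, hent, rfl, rfl⟩
  refine hA ⟨r, c, fun s _ => ⟨hr s.lt_succ_self, hc s.lt_succ_self⟩, fun s hs => ?_,
    fun s hs => (hent s hs).2.2⟩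
  have hrs := hr.monotone (show s ≤ k - 1 by omega)
  have hcs := hc.monotone (show s ≤ k - 1 by omega)
  exact ⟨(hent s hs).1, hrs.trans hi, (hent s hs).2.1, hcs.trans hj⟩

open Classical in
/-- The length of a longest chain of ones of `A` ending at `(i, j)`; it is at most `i`. -/
noncomputable def chainHeight (A : ℕ → ℕ → Bool) (i j : ℕ) : ℕ :=
  Nat.findGreatest (HasChain A i j) i

section chainHeight

variable {A : ℕ → ℕ → Bool} {i j : ℕ}

lemma HasChain.le_chainHeight {t : ℕ} (h : HasChain A i j t) : t ≤ chainHeight A i j := by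
  classical
  exact Nat.le_findGreatest h.le_fst_snd.1 h

lemma one_le_chainHeight (hA : A i j = true) (hi : 1 ≤ i) (hj : 1 ≤ j) :
    1 ≤ chainHeight A i j :=
  (HasChain.one hA hi hj).le_chainHeight

lemma hasChain_chainHeight (hA : A i j = true) (hi : 1 ≤ i) (hj : 1 ≤ j) :
    HasChain A i j (chainHeight A i j) := by
  classical
  exact Nat.findGreatest_spec hi (HasChain.one hA hi hj)

lemma chainHeight_lt_chainHeight (hA : A i j = true) (hi : 1 ≤ i) (hj : 1 ≤ j) {i' j' : ℕ}
    (hA' : A i' j' = true) (hii : i < i') (hjj : j < j') :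
    chainHeight A i j < chainHeight A i' j' :=
  ((hasChain_chainHeight hA hi hj).snoc (one_le_chainHeight hA hi hj) hii hjj hA').le_chainHeight

lemma AvoidId.chainHeight_lt {m n k : ℕ} (hAv : AvoidId m n k A) (hk : 1 ≤ k)
    (hA : A i j = true) (hi : 1 ≤ i) (him : i ≤ m) (hj : 1 ≤ j) (hjn : j ≤ n) :
    chainHeight A i j < k := by
  by_contra! h
  exact hAv.not_hasChain hk him hjn ((hasChain_chainHeight hA hi hj).drop hk h)

end chainHeight

lemma card_le_of_isAntichain {S : Finset (ℕ × ℕ)} {m n t : ℕ}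
    (hS : ∀ p ∈ S, t ≤ p.1 ∧ p.1 ≤ m ∧ t ≤ p.2 ∧ p.2 ≤ n)
    (hanti : IsAntichain (fun p q : ℕ × ℕ => p.1 < q.1 ∧ p.2 < q.2) (S : Set (ℕ × ℕ))) :
    #S ≤ m + n + 1 - 2 * t := by
  -- distinct points on a common diagonal `p.1 - p.2 = const` would be comparable
  have hinj : Set.InjOn (fun p : ℕ × ℕ => p.1 + n - p.2) S := by
    intro p hp q hq hpq
    have := hS p hp; have := hS q hq
    by_contra hne
    simp only at hpq
    rcases lt_or_gt_of_ne (show p.1 ≠ q.1 by grind) with h | h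
    · exact hanti hp hq hne ⟨h, by omega⟩
    · exact hanti hq hp (Ne.symm hne) ⟨h, by omega⟩
  calc #S ≤ #(Icc t (m + n - t)) :=
        card_le_card_of_injOn _ (fun p hp => by have := hS p hp; simp; omega) hinj
    _ = m + n + 1 - 2 * t := by simp; omega

lemma sum_Icc_sub_two_mul {N K : ℕ} (h : 2 * K ≤ N) :
    ∑ t ∈ Icc 1 K, (N + 1 - 2 * t) = K * (N - K) := by
  induction K with
  | zero => simp
  | succ K ih =>
    rw [sum_Icc_succ_top (by omega), ih (by omega)]
    zify [show 2 * (K + 1) ≤ N + 1 by omega, show K ≤ N by omega, show K + 1 ≤ N by omega]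
    ring

def ones (m n : ℕ) (A : ℕ → ℕ → Bool) : Finset (ℕ × ℕ) :=
  ((Icc 1 m) ×ˢ (Icc 1 n)).filter fun p => A p.1 p.2 = true

section ones

variable {m n : ℕ} {A : ℕ → ℕ → Bool}

lemma mem_ones {p : ℕ × ℕ} :
    p ∈ ones m n A ↔ (1 ≤ p.1 ∧ p.1 ≤ m) ∧ (1 ≤ p.2 ∧ p.2 ≤ n) ∧ A p.1 p.2 = true := by
  simp [ones, and_assoc]

lemma chainHeight_mem_Icc {k : ℕ} (hA : AvoidId m n k A) (hk : 1 ≤ k) {p : ℕ × ℕ}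
    (hp : p ∈ ones m n A) : chainHeight A p.1 p.2 ∈ Icc 1 (k - 1) := by
  obtain ⟨⟨hi, him⟩, ⟨hj, hjn⟩, hp⟩ := mem_ones.1 hp
  have := hA.chainHeight_lt hk hp hi him hj hjn
  exact mem_Icc.2 ⟨one_le_chainHeight hp hi hj, by omega⟩

lemma card_chainHeight_eq_le (t : ℕ) :
    #{p ∈ ones m n A | chainHeight A p.1 p.2 = t} ≤ m + n + 1 - 2 * t := by
  refine card_le_of_isAntichain (fun p hp => ?_) ?_
  · obtain ⟨⟨⟨hi, him⟩, ⟨hj, hjn⟩, hA⟩, rfl⟩ := And.imp_left mem_ones.1 (mem_filter.1 hp)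
    have := (hasChain_chainHeight hA hi hj).le_fst_snd
    omega
  · intro p hp q hq _ ⟨hpq1, hpq2⟩
    obtain ⟨⟨⟨hi, -⟩, ⟨hj, -⟩, hAp⟩, hpt⟩ := And.imp_left mem_ones.1 (mem_filter.1 hp)
    obtain ⟨⟨-, -, hAq⟩, hqt⟩ := And.imp_left mem_ones.1 (mem_filter.1 hq)
    have := chainHeight_lt_chainHeight hAp hi hj hAq hpq1 hpq2
    omega

end ones

theorem stmt_5 (m n k : ℕ) (hk : 3 ≤ k) (hm : k ≤ m) (hn : k ≤ n)
    (A : ℕ → ℕ → Bool) (hA : AvoidId m n k A) :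
    onesCount m n A ≤ (k - 1) * (m + n - (k - 1)) := by
  calc onesCount m n A
      = ∑ t ∈ Icc 1 (k - 1), #{p ∈ ones m n A | chainHeight A p.1 p.2 = t} :=
        card_eq_sum_card_fiberwise fun p hp => chainHeight_mem_Icc hA (by omega) hp
    _ ≤ ∑ t ∈ Icc 1 (k - 1), (m + n + 1 - 2 * t) := sum_le_sum fun t _ => card_chainHeight_eq_le t
    _ = (k - 1) * (m + n - (k - 1)) := sum_Icc_sub_two_mul (by omega)
end

section
/- Let m, n, k be positive integers with m, n ≥ k ≥ 3. Then there exists a 12⋯k-avoiding m×n (0,1)-matrix whose number of 1's equals (k−1)(m + n − (k−1)); hence the maximum number of 1's of a 12⋯k-avoiding m×n (0,1)-matrix is exactly (k−1)(m + n − (k−1)). -/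
/-! The 1's on a diagonal `i - j = d` form a chain, so at most `k - 1` of them lie weakly above-left
of any cell; call that number the rank `ℓ` of a 1. Since `ℓ ≤ min i j`, the pair `(ℓ, i - j)` lies in
`[1, k - 1] × [ℓ - n, m - ℓ]`, and it determines the 1. Hence there are at most
`∑ ℓ ∈ [1, k - 1], (m + n + 1 - 2ℓ) = (k - 1)(m + n - (k - 1))` of them. The matrix whose 1's fill the
first `k - 1` rows and columns attains this: any chain in it has its `k`-th entry in row and column
`≥ k`. -/

open Finset

lemma Finset.exists_chain_of_le_card {S : Finset ℕ} {k : ℕ} (hk : k ≤ S.card) :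
    ∃ f : ℕ → ℕ, (∀ t, t + 1 < k → f t < f (t + 1)) ∧ ∀ t, t < k → f t ∈ S := by
  refine ⟨fun t => if h : t < S.card then S.orderEmbOfFin rfl ⟨t, h⟩ else 0, ?_, ?_⟩
  · intro t ht
    simp only [dif_pos (by omega : t < S.card), dif_pos (by omega : t + 1 < S.card)]
    exact (S.orderEmbOfFin rfl).strictMono (Fin.mk_lt_mk.2 t.lt_succ_self)
  · intro t ht
    simp only [dif_pos (by omega : t < S.card)]
    exact S.orderEmbOfFin_mem rfl _

lemma add_one_le_of_chain {r : ℕ → ℕ} {k : ℕ} (hr : ∀ t, t + 1 < k → r t < r (t + 1))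
    (h0 : 1 ≤ r 0) : ∀ t, t < k → t + 1 ≤ r t
  | 0, _ => h0
  | t + 1, ht => by have := add_one_le_of_chain hr h0 t (by omega); have := hr t ht; omega

section DiagOnes

variable (A : ℕ → ℕ → Bool)

/-- The diagonal through `(i, j)` consists of the cells `(i - j + s, j - i + s)`, `s ≥ 1` (one of the
truncated differences is `0`), with `(i, j)` at `s = min i j`; these are the positions `s` of its
1's weakly above-left of `(i, j)`. -/
def diagOnes (i j : ℕ) : Finset ℕ :=
  (Icc 1 (min i j)).filter fun s => A (i - j + s) (j - i + s) = true

lemma card_diagOnes_le_min (i j : ℕ) : (diagOnes A i j).card ≤ min i j :=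
  (card_filter_le _ _).trans (by simp)

lemma min_mem_diagOnes {i j : ℕ} (hi : 1 ≤ i) (hj : 1 ≤ j) (hA : A i j = true) :
    min i j ∈ diagOnes A i j :=
  mem_filter.2 ⟨mem_Icc.2 ⟨by omega, le_rfl⟩, by
    rwa [show i - j + min i j = i by omega, show j - i + min i j = j by omega]⟩

lemma diagOnes_ssubset_of_min_lt {i j i' j' : ℕ} (hd : (i : ℤ) - j = i' - j')
    (hlt : min i j < min i' j') (hA : A i' j' = true) :
    diagOnes A i j ⊂ diagOnes A i' j' := by
  have hij : i - j = i' - j' ∧ j - i = j' - i' := by omega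
  refine ⟨fun s hs => ?_, fun hsub => ?_⟩
  · simp only [diagOnes, mem_filter, mem_Icc, hij] at hs ⊢
    exact ⟨⟨hs.1.1, by omega⟩, hs.2⟩
  · have := mem_Icc.1 (mem_filter.1 (hsub (min_mem_diagOnes A (by omega) (by omega) hA))).1
    omega

lemma card_diagOnes_lt_of_avoidId {m n k i j : ℕ} (hav : AvoidId m n k A) (hi : i ≤ m)
    (hj : j ≤ n) : (diagOnes A i j).card < k := by
  by_contra! hle
  obtain ⟨f, hmono, hmem⟩ := exists_chain_of_le_card hle
  refine hav ⟨fun t => i - j + f t, fun t => j - i + f t, fun t ht => ?_, fun t ht => ?_,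
    fun t ht => (mem_filter.1 (hmem t ht)).2⟩
  · have := hmono t ht
    dsimp only
    exact ⟨by omega, by omega⟩
  · have := mem_Icc.1 (mem_filter.1 (hmem t ht)).1
    dsimp only
    exact ⟨by omega, by omega, by omega, by omega⟩

end DiagOnes

noncomputable def rankDiagonalPairs (m n K : ℕ) : Finset (Σ _ : ℕ, ℤ) :=
  (Icc 1 K).sigma fun ℓ => Icc ((ℓ : ℤ) - n) (m - ℓ)

lemma card_rankDiagonalPairs {m n K : ℕ} (hK : 2 * K ≤ m + n) :
    (rankDiagonalPairs m n K).card = K * (m + n - K) := by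
  rw [rankDiagonalPairs, card_sigma]
  induction K with
  | zero => simp
  | succ K ih =>
    rw [sum_Icc_succ_top (by omega), ih (by omega), Int.card_Icc]
    have : (m : ℤ) - ↑(K + 1) + 1 - (↑(K + 1) - n) = ((m + n + 1 - 2 * (K + 1) : ℕ) : ℤ) := by
      push_cast; omega
    rw [this, Int.toNat_natCast]
    obtain ⟨D, hD⟩ := Nat.exists_eq_add_of_le hK
    rw [hD, show 2 * (K + 1) + D - K = K + 2 + D by omega,
      show 2 * (K + 1) + D + 1 - 2 * (K + 1) = D + 1 by omega,
      show 2 * (K + 1) + D - (K + 1) = K + 1 + D by omega]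
    ring

theorem onesCount_le_of_avoidId {m n k : ℕ} {A : ℕ → ℕ → Bool} (hav : AvoidId m n k A)
    (hmn : 2 * (k - 1) ≤ m + n) :
    onesCount m n A ≤ (k - 1) * (m + n - (k - 1)) := by
  rw [onesCount, ← card_rankDiagonalPairs hmn]
  refine card_le_card_of_injOn (fun p => ⟨(diagOnes A p.1 p.2).card, (p.1 : ℤ) - p.2⟩) ?_ ?_
  · intro p hp
    simp only [coe_filter, mem_product, mem_Icc, Set.mem_ofPred_eq] at hp
    have h1 := card_pos.2 ⟨_, min_mem_diagOnes A hp.1.1.1 hp.1.2.1 hp.2⟩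
    have h2 := card_diagOnes_lt_of_avoidId A hav hp.1.1.2 hp.1.2.2
    have h3 := card_diagOnes_le_min A p.1 p.2
    simp only [rankDiagonalPairs, coe_sigma, Set.mem_sigma_iff, coe_Icc, Set.mem_Icc]
    omega
  · intro p hp q hq hpq
    simp only [coe_filter, mem_product, mem_Icc, Set.mem_ofPred_eq] at hp hq
    simp only [Sigma.mk.injEq, heq_eq_eq] at hpq
    obtain ⟨hrank, hd⟩ := hpq
    rcases lt_trichotomy (min p.1 p.2) (min q.1 q.2) with hlt | heq | hgt
    · exact absurd hrank (card_lt_card (diagOnes_ssubset_of_min_lt A hd hlt hq.2)).ne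
    · exact Prod.ext (by omega) (by omega)
    · exact absurd hrank (card_lt_card (diagOnes_ssubset_of_min_lt A hd.symm hgt hp.2)).ne'

def cornerMatrix (k : ℕ) : ℕ → ℕ → Bool := fun i j => decide (i < k ∨ j < k)

lemma avoidId_cornerMatrix (m n : ℕ) {k : ℕ} (hk : 1 ≤ k) : AvoidId m n k (cornerMatrix k) := by
  rintro ⟨r, c, hmono, hbd, hA⟩
  have hr := add_one_le_of_chain (fun t ht => (hmono t ht).1) (hbd 0 hk).1 (k - 1) (by omega)
  have hc := add_one_le_of_chain (fun t ht => (hmono t ht).2) (hbd 0 hk).2.2.1 (k - 1) (by omega)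
  have := hA (k - 1) (by omega)
  simp only [cornerMatrix, decide_eq_true_eq] at this
  omega

lemma onesCount_cornerMatrix {m n k : ℕ} (hk : 1 ≤ k) (hm : k - 1 ≤ m) (hn : k - 1 ≤ n) :
    onesCount m n (cornerMatrix k) = (k - 1) * (m + n - (k - 1)) := by
  have hcorner : ((Icc 1 m ×ˢ Icc 1 n).filter fun p => cornerMatrix k p.1 p.2 = true) =
      (Icc 1 m ×ˢ Icc 1 n) \ (Icc k m ×ˢ Icc k n) := by
    ext p
    simp only [cornerMatrix, mem_filter, mem_sdiff, mem_product, mem_Icc, decide_eq_true_eq]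
    omega
  have hsub : Icc k m ×ˢ Icc k n ⊆ Icc 1 m ×ˢ Icc 1 n :=
    product_subset_product (Icc_subset_Icc_left (by omega)) (Icc_subset_Icc_left (by omega))
  rw [onesCount, hcorner, card_sdiff_of_subset hsub, card_product, card_product,
    Nat.card_Icc, Nat.card_Icc, Nat.card_Icc, Nat.card_Icc]
  obtain ⟨x, rfl⟩ := Nat.exists_eq_add_of_le hm
  obtain ⟨y, rfl⟩ := Nat.exists_eq_add_of_le hn
  rw [show k - 1 + x + 1 - k = x by omega, show k - 1 + y + 1 - k = y by omega,
    show k - 1 + x + 1 - 1 = k - 1 + x by omega, show k - 1 + y + 1 - 1 = k - 1 + y by omega,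
    show k - 1 + x + (k - 1 + y) - (k - 1) = k - 1 + x + y by omega, Nat.sub_eq_of_eq_add]
  ring

theorem stmt_6 (m n k : ℕ) (hk : 3 ≤ k) (hm : k ≤ m) (hn : k ≤ n) :
    (∃ A : ℕ → ℕ → Bool, AvoidId m n k A ∧
      onesCount m n A = (k - 1) * (m + n - (k - 1))) ∧
    IsGreatest {c : ℕ | ∃ A : ℕ → ℕ → Bool, AvoidId m n k A ∧ onesCount m n A = c}
      ((k - 1) * (m + n - (k - 1))) := by
  have hcorner : AvoidId m n k (cornerMatrix k) ∧
      onesCount m n (cornerMatrix k) = (k - 1) * (m + n - (k - 1)) :=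
    ⟨avoidId_cornerMatrix m n (by omega), onesCount_cornerMatrix (by omega) (by omega) (by omega)⟩
  refine ⟨⟨_, hcorner⟩, ⟨_, hcorner⟩, ?_⟩
  rintro c ⟨A, hA, rfl⟩
  exact onesCount_le_of_avoidId hA (by omega)
end

section
/- Let m, n ≥ 3 and let A be an m×n (0,1)-matrix with A(1,n) = 1. Then A is 312-avoiding if and only if the (m−1)×(n−1) submatrix A(1,n)̂ of A obtained by deleting row 1 and column n is 12-avoiding; that is, if and only if there do not exist rows 2 ≤ r₂ < r₃ ≤ m and columns 1 ≤ c₂ < c₃ ≤ n−1 with A(r₂,c₂) = A(r₃,c₃) = 1. -/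
/-- `A` is 312-avoiding: no rows `r₁ < r₂ < r₃` and columns `c₁ < c₂ < c₃` with
`A r₁ c₃ = A r₂ c₁ = A r₃ c₂ = 1`. -/
def Avoid312 (m n : ℕ) (A : ℕ → ℕ → Bool) : Prop :=
  ¬ ∃ r₁ r₂ r₃ c₁ c₂ c₃ : ℕ,
    1 ≤ r₁ ∧ r₁ < r₂ ∧ r₂ < r₃ ∧ r₃ ≤ m ∧
    1 ≤ c₁ ∧ c₁ < c₂ ∧ c₂ < c₃ ∧ c₃ ≤ n ∧
    A r₁ c₃ = true ∧ A r₂ c₁ = true ∧ A r₃ c₂ = true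

theorem stmt_10_general (m n : ℕ) (A : ℕ → ℕ → Bool)
    (h1n : A 1 n = true) :
    Avoid312 m n A ↔
      ¬ ∃ r₂ r₃ c₂ c₃ : ℕ, 2 ≤ r₂ ∧ r₂ < r₃ ∧ r₃ ≤ m ∧
        1 ≤ c₂ ∧ c₂ < c₃ ∧ c₃ ≤ n - 1 ∧
        A r₂ c₂ = true ∧ A r₃ c₃ = true := by
  refine not_congr ⟨?_, ?_⟩
  · -- The 12-pattern of a 312-pattern lies below its first row and left of its last column.
    rintro ⟨r₁, r₂, r₃, c₁, c₂, c₃, hr₁, hr₁₂, hr₂₃, hr₃, hc₁, hc₁₂, hc₂₃, hc₃, -, h₂, h₃⟩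
    exact ⟨r₂, r₃, c₁, c₂, by omega, hr₂₃, hr₃, hc₁, hc₁₂, by omega, h₂, h₃⟩
  · -- A 12-pattern in the submatrix completes to a 312-pattern with the corner entry `A 1 n`.
    rintro ⟨r₂, r₃, c₂, c₃, hr₂, hr₂₃, hr₃, hc₂, hc₂₃, hc₃, h₂, h₃⟩
    exact ⟨1, r₂, r₃, c₂, c₃, n, le_rfl, hr₂, hr₂₃, hr₃, hc₂, hc₂₃, by omega, le_rfl, h1n, h₂, h₃⟩

theorem stmt_10 (m n : ℕ) (hm : 3 ≤ m) (hn : 3 ≤ n) (A : ℕ → ℕ → Bool)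
    (h1n : A 1 n = true) :
    Avoid312 m n A ↔
      ¬ ∃ r₂ r₃ c₂ c₃ : ℕ, 2 ≤ r₂ ∧ r₂ < r₃ ∧ r₃ ≤ m ∧
        1 ≤ c₂ ∧ c₂ < c₃ ∧ c₃ ≤ n - 1 ∧
        A r₂ c₂ = true ∧ A r₃ c₃ = true :=
  stmt_10_general m n A h1n
end

section
/- Let m, n ≥ 3 and let A be a maximal 312-avoiding m×n (0,1)-matrix with A(1,n) = 1. Then every entry of the first row and of the last column of A equals 1, and the number of 1's of A is exactly 2(m + n − 2). -/
/-- The matrix obtained from `A` by changing the entry in position `(i, j)` to `1`. -/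
def setOne (A : ℕ → ℕ → Bool) (i j : ℕ) : ℕ → ℕ → Bool :=
  fun i' j' => if i' = i ∧ j' = j then true else A i' j'

/-- `A` is maximal 312-avoiding. -/
def MaximalAvoid312 (m n : ℕ) (A : ℕ → ℕ → Bool) : Prop :=
  Avoid312 m n A ∧
    ∀ i j : ℕ, 1 ≤ i → i ≤ m → 1 ≤ j → j ≤ n → A i j = false →
      ¬ Avoid312 m n (setOne A i j)

/-!
Since `A 1 n = 1`, a 312 pattern created by a new one in the first row or the last column could
use the cell `(1, n)` as its top-right entry instead, so maximality fills this hook. Once the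
first row is full, two ones outside the hook never form a 12 pattern (a one of the first row
further right would complete a 312), so they form a chain in the `(m - 1) × (n - 1)` grid ordered
south-west, and maximality of `A` makes it a maximal chain, i.e. a lattice path of
`(m - 1) + (n - 1) - 1` cells. Counting gives `n + (m - 1) + (m + n - 3) = 2 (m + n - 2)`.
-/

open Finset

lemma setOne_eq_true_iff {A : ℕ → ℕ → Bool} {i j a b : ℕ} :
    setOne A i j a b = true ↔ (a = i ∧ b = j) ∨ A a b = true := by
  unfold setOne
  split_ifs with h <;> simp [h]

/-- In matrix coordinates (row, column): `t` lies weakly below and weakly to the left of `s`. -/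
def SWLE (s t : ℕ × ℕ) : Prop := s.1 ≤ t.1 ∧ t.2 ≤ s.2

section MaximalChain

variable {S : Finset (ℕ × ℕ)} {a b c d : ℕ}

def diagIndex (d : ℕ) (s : ℕ × ℕ) : ℕ := s.1 + (d - s.2)

lemma SWLE.antisymm {s t : ℕ × ℕ} (hst : SWLE s t) (hts : SWLE t s) : s = t :=
  Prod.ext (by unfold SWLE at *; omega) (by unfold SWLE at *; omega)

lemma swle_of_diagIndex_le (hchain : IsChain SWLE (S : Set (ℕ × ℕ)))
    (hd : ∀ s ∈ S, s.2 ≤ d) {s t : ℕ × ℕ} (hs : s ∈ S) (ht : t ∈ S)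
    (h : diagIndex d s ≤ diagIndex d t) : SWLE s t := by
  rcases eq_or_ne s t with rfl | hne
  · exact ⟨le_rfl, le_rfl⟩
  rcases hchain hs ht hne with hst | hts
  · exact hst
  · have hsd := hd s hs
    have htd := hd t ht
    unfold SWLE diagIndex at *
    omega

lemma injOn_diagIndex (hchain : IsChain SWLE (S : Set (ℕ × ℕ))) (hd : ∀ s ∈ S, s.2 ≤ d) :
    Set.InjOn (diagIndex d) S := fun _ hs _ ht h =>
  (swle_of_diagIndex_le hchain hd hs ht h.le).antisymm
    (swle_of_diagIndex_le hchain hd ht hs h.ge)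

variable (hSbox : S ⊆ Icc a b ×ˢ Icc c d) (hchain : IsChain SWLE (S : Set (ℕ × ℕ)))
  (hmax : ∀ p ∈ Icc a b ×ˢ Icc c d, (∀ s ∈ S, p ≠ s → SWLE p s ∨ SWLE s p) → p ∈ S)
include hSbox hchain hmax

lemma exists_diagIndex_eq (hab : a ≤ b) (hcd : c ≤ d) {v : ℕ} (hav : a ≤ v)
    (hvb : v ≤ b + d - c) : ∃ s ∈ S, diagIndex d s = v := by
  have hbox : ∀ s ∈ S, a ≤ s.1 ∧ s.1 ≤ b ∧ c ≤ s.2 ∧ s.2 ≤ d := fun s hs => by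
    simpa [and_assoc] using hSbox hs
  have hd : ∀ s ∈ S, s.2 ≤ d := fun s hs => (hbox s hs).2.2.2
  -- both corners are comparable with every cell of the box
  have hbot : (a, d) ∈ S := hmax _ (by simp [hab, hcd]) fun s hs _ => by
    have := hbox s hs; left; unfold SWLE; omega
  have htop : (b, c) ∈ S := hmax _ (by simp [hab, hcd]) fun s hs _ => by
    have := hbox s hs; right; unfold SWLE; omega
  by_contra! hv
  obtain ⟨l, hlL, hlmax⟩ := (S.filter (diagIndex d · < v)).exists_max_image
    (diagIndex d) ⟨(a, d), mem_filter.2 ⟨hbot, by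
      have := hv _ hbot; unfold diagIndex at *; omega⟩⟩
  obtain ⟨u, huU, humin⟩ := (S.filter (v < diagIndex d ·)).exists_min_image
    (diagIndex d) ⟨(b, c), mem_filter.2 ⟨htop, by
      have := hv _ htop; unfold diagIndex at *; omega⟩⟩
  rw [mem_filter] at hlL huU
  have hlu : SWLE l u := swle_of_diagIndex_le hchain hd hlL.1 huU.1 (by omega)
  -- `l` and `u` are the cells of `S` nearest to the diagonal `v` on either side, so a cell of
  -- that diagonal between them is comparable with all of `S`
  obtain ⟨x, hx⟩ : ∃ x, x = min u.1 (v + l.2 - d) := ⟨_, rfl⟩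
  have hl := hbox l hlL.1
  have hu := hbox u huU.1
  unfold SWLE at hlu
  unfold diagIndex at hlL huU
  have hlp : SWLE l (x, x + d - v) := by unfold SWLE; dsimp only; omega
  have hpu : SWLE (x, x + d - v) u := by unfold SWLE; dsimp only; omega
  refine hv (x, x + d - v) (hmax _ ?_ fun s hs _ => ?_) (by unfold diagIndex; dsimp only; omega)
  · simp only [mem_product, mem_Icc]
    unfold SWLE at hlp hpu
    omega
  · rcases (hv s hs).lt_or_gt with hsv | hsv
    · have hsl := swle_of_diagIndex_le hchain hd hs hlL.1 (hlmax s (mem_filter.2 ⟨hs, hsv⟩))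
      right; unfold SWLE at *; omega
    · have hus := swle_of_diagIndex_le hchain hd huU.1 hs (humin s (mem_filter.2 ⟨hs, hsv⟩))
      left; unfold SWLE at *; omega

/-- `diagIndex d` maps a maximal chain of the box bijectively onto the diagonals of the box. -/
theorem card_eq_of_maximal_chain (hab : a ≤ b) (hcd : c ≤ d) :
    S.card = b - a + (d - c) + 1 := by
  have hd : ∀ s ∈ S, s.2 ≤ d := fun s hs => (mem_Icc.1 (mem_product.1 (hSbox hs)).2).2
  have himage : S.image (diagIndex d) = Icc a (b + d - c) := by
    refine Subset.antisymm (fun v hv => ?_) fun v hv => ?_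
    · obtain ⟨s, hs, rfl⟩ := mem_image.1 hv
      have := hSbox hs
      simp only [mem_product, mem_Icc] at this ⊢
      unfold diagIndex
      omega
    · obtain ⟨s, hs, hsv⟩ :=
        exists_diagIndex_eq hSbox hchain hmax hab hcd (mem_Icc.1 hv).1 (mem_Icc.1 hv).2
      exact mem_image.2 ⟨s, hs, hsv⟩
  rw [← card_image_of_injOn (injOn_diagIndex hchain hd), himage, Nat.card_Icc]
  omega

end MaximalChain

section Matrix

variable {m n : ℕ} {A : ℕ → ℕ → Bool}

theorem MaximalAvoid312.eq_true_of_corner (hA : MaximalAvoid312 m n A) (h1n : A 1 n = true)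
    {i j : ℕ} (hi : 1 ≤ i) (him : i ≤ m) (hj : 1 ≤ j) (hjn : j ≤ n) (hij : i = 1 ∨ j = n) :
    A i j = true := by
  by_contra hf
  refine hA.2 i j hi him hj hjn (by simpa using hf) ?_
  rintro ⟨r₁, r₂, r₃, c₁, c₂, c₃, h1, h2, h3, h4, h5, h6, h7, h8, -, e2, e3⟩
  rw [setOne_eq_true_iff] at e2 e3
  exact hA.1 ⟨1, r₂, r₃, c₁, c₂, n, le_rfl, by omega, h3, h4, h5, h6, by omega, le_rfl, h1n,
    e2.resolve_left (by omega), e3.resolve_left (by omega)⟩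

def innerOnes (m n : ℕ) (A : ℕ → ℕ → Bool) : Finset (ℕ × ℕ) :=
  (Icc 2 m ×ˢ Icc 1 (n - 1)).filter fun p => A p.1 p.2 = true

lemma mem_innerOnes {p : ℕ × ℕ} :
    p ∈ innerOnes m n A ↔ 2 ≤ p.1 ∧ p.1 ≤ m ∧ 1 ≤ p.2 ∧ p.2 ≤ n - 1 ∧ A p.1 p.2 = true := by
  simp [innerOnes, and_assoc]

theorem isChain_innerOnes (hA : Avoid312 m n A) (hrow : ∀ j, 1 ≤ j → j ≤ n → A 1 j = true) :
    IsChain SWLE (innerOnes m n A : Set (ℕ × ℕ)) := by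
  have no12 : ∀ s ∈ innerOnes m n A, ∀ t ∈ innerOnes m n A, s.1 < t.1 → s.2 < t.2 → False := by
    intro s hs t ht h1 h2
    rw [mem_innerOnes] at hs ht
    exact hA ⟨1, s.1, t.1, s.2, t.2, t.2 + 1, le_rfl, by omega, h1, ht.2.1, hs.2.2.1, h2,
      by omega, by omega, hrow _ (by omega) (by omega), hs.2.2.2.2, ht.2.2.2.2⟩
  intro s hs t ht _
  by_contra! h
  unfold SWLE at h
  rcases lt_or_gt_of_ne (show s.1 ≠ t.1 by omega) with hlt | hlt
  · exact no12 s hs t ht hlt (by omega)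
  · exact no12 t ht s hs hlt (by omega)

theorem mem_innerOnes_of_comparable (hA : MaximalAvoid312 m n A)
    (hrow : ∀ j, 1 ≤ j → j ≤ n → A 1 j = true) {p : ℕ × ℕ} (hp : p ∈ Icc 2 m ×ˢ Icc 1 (n - 1))
    (hcomp : ∀ s ∈ innerOnes m n A, p ≠ s → SWLE p s ∨ SWLE s p) : p ∈ innerOnes m n A := by
  simp only [mem_product, mem_Icc] at hp
  by_contra hp'
  refine hA.2 p.1 p.2 (by omega) hp.1.2 hp.2.1 (by omega)
    (by simpa [mem_innerOnes, hp] using hp') ?_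
  rintro ⟨r₁, r₂, r₃, c₁, c₂, c₃, h1, h2, h3, h4, h5, h6, h7, h8, -, e2, e3⟩
  -- the two lower entries of the pattern are an increasing pair in the chain `innerOnes ∪ {p}`
  have hins : IsChain SWLE (insert p (innerOnes m n A : Set (ℕ × ℕ))) :=
    (isChain_innerOnes hA.1 hrow).insert hcomp
  have hmem : ∀ q : ℕ × ℕ, 2 ≤ q.1 → q.1 ≤ m → 1 ≤ q.2 → q.2 ≤ n - 1 →
      setOne A p.1 p.2 q.1 q.2 = true → q ∈ insert p (innerOnes m n A : Set (ℕ × ℕ)) := by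
    intro q hq1 hqm hq2 hqn hq
    rcases setOne_eq_true_iff.1 hq with ⟨hq₁, hq₂⟩ | hAq
    · exact Set.mem_insert_iff.2 (Or.inl (Prod.ext hq₁ hq₂))
    · exact Set.mem_insert_of_mem _ (mem_innerOnes.2 ⟨hq1, hqm, hq2, hqn, hAq⟩)
  rcases hins (hmem (r₂, c₁) (by omega) (by omega) h5 (by omega) e2)
      (hmem (r₃, c₂) (by omega) h4 (by omega) (by omega) e3) (by simp only [ne_eq, Prod.mk.injEq]; omega) with h | h <;>
    · unfold SWLE at h; omega

theorem card_innerOnes (hA : MaximalAvoid312 m n A) (hrow : ∀ j, 1 ≤ j → j ≤ n → A 1 j = true)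
    (hm : 2 ≤ m) (hn : 2 ≤ n) : (innerOnes m n A).card = m + n - 3 := by
  have := card_eq_of_maximal_chain (S := innerOnes m n A) (filter_subset _ _)
    (isChain_innerOnes hA.1 hrow) (fun p hp hcomp => mem_innerOnes_of_comparable hA hrow hp hcomp)
    hm (by omega : 1 ≤ n - 1)
  omega

theorem onesCount_eq_of_hook (hrow : ∀ j, 1 ≤ j → j ≤ n → A 1 j = true)
    (hcol : ∀ i, 1 ≤ i → i ≤ m → A i n = true) (hm : 1 ≤ m) (hn : 1 ≤ n) :
    onesCount m n A = n + (m - 1) + (innerOnes m n A).card := by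
  have hsplit : ((Icc 1 m ×ˢ Icc 1 n).filter fun p => A p.1 p.2 = true) =
      ({1} ×ˢ Icc 1 n ∪ Icc 2 m ×ˢ {n}) ∪ innerOnes m n A := by
    ext ⟨i, j⟩
    simp only [mem_filter, mem_union, mem_product, mem_Icc, mem_singleton, mem_innerOnes]
    constructor
    · rintro ⟨⟨⟨hi, him⟩, hj, hjn⟩, hij⟩
      simp only [hij, and_true]
      omega
    · rintro ((⟨rfl, hj, hjn⟩ | ⟨⟨hi, him⟩, rfl⟩) | ⟨hi, him, hj, hjn, hij⟩)
      · exact ⟨by omega, hrow j hj hjn⟩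
      · exact ⟨by omega, hcol i (by omega) him⟩
      · exact ⟨by omega, hij⟩
  have hdisj₁ : Disjoint ({1} ×ˢ Icc 1 n) (Icc 2 m ×ˢ {n}) := by
    rw [disjoint_left]
    rintro ⟨i, j⟩ h h'
    simp only [mem_product, mem_Icc, mem_singleton] at h h'
    omega
  have hdisj₂ : Disjoint ({1} ×ˢ Icc 1 n ∪ Icc 2 m ×ˢ {n}) (innerOnes m n A) := by
    rw [disjoint_left]
    rintro ⟨i, j⟩ h h'
    simp only [mem_union, mem_product, mem_Icc, mem_singleton] at h
    rw [mem_innerOnes] at h'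
    omega
  rw [onesCount, hsplit, card_union_of_disjoint hdisj₂, card_union_of_disjoint hdisj₁]
  simp only [card_product, card_singleton, Nat.card_Icc]
  omega

end Matrix

theorem stmt_11 (m n : ℕ) (hm : 3 ≤ m) (hn : 3 ≤ n) (A : ℕ → ℕ → Bool)
    (hA : MaximalAvoid312 m n A) (h1n : A 1 n = true) :
    (∀ j : ℕ, 1 ≤ j → j ≤ n → A 1 j = true) ∧
    (∀ i : ℕ, 1 ≤ i → i ≤ m → A i n = true) ∧
    onesCount m n A = 2 * (m + n - 2) := by
  have hrow : ∀ j, 1 ≤ j → j ≤ n → A 1 j = true := fun j hj hjn =>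
    hA.eq_true_of_corner h1n le_rfl (by omega) hj hjn (Or.inl rfl)
  have hcol : ∀ i, 1 ≤ i → i ≤ m → A i n = true := fun i hi him =>
    hA.eq_true_of_corner h1n hi him (by omega) le_rfl (Or.inr rfl)
  refine ⟨hrow, hcol, ?_⟩
  rw [onesCount_eq_of_hook hrow hcol (by omega) (by omega),
    card_innerOnes hA hrow (by omega) (by omega)]
  omega
end

section
/- Let k ≥ 3, let m, n ≥ k, and let A be a maximal k12⋯(k−1)-avoiding m×n (0,1)-matrix with A(1,n) = 0. Then there exist integers 1 ≤ p₁ ≤ p₂ ≤ ⋯ ≤ p_m = n such that, setting p₀ = 1, for every row i (1 ≤ i ≤ m): A(i,j) = 1 for all j with p_{i−1} ≤ j ≤ p_i, and A(i,j) = 0 for all j with j > p_i. (In other words, the 0's in the upper-right corner of A form a reverse Ferrers array bordered by a complete zigzag path of m + n − 1 ones running from position (1,1) to position (m,n).) -/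
/-!
In a maximal avoiding matrix, turning a zero at `(i, j)` into a one creates the pattern. If the
new one plays the role of the top entry `(r₁, c_k)`, the rest of the occurrence is a copy of
`12⋯(k-1)` strictly south-west of `(i, j)`; otherwise the old top entry is a one strictly
north-east of `(i, j)`. A one never has a copy of `12⋯(k-1)` strictly south-west of it, so a zero
with a one to its right in its row (or above it in its column) has a one strictly north-east of it.

Let `q i` be the column of the last one in row `i`. Going down the rows, this shows that
`A (i+1) (q i) = 1`, so `q` is weakly increasing, and that row `i` is one on `[q (i-1), q i]`.
-/

/-- `A` is `k12⋯(k-1)`-avoiding: there are no strictly increasing rows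
`r 0 < ⋯ < r (k-1)` and columns `c 0 < ⋯ < c (k-1)` in the array with
`A (r 0) (c (k-1)) = 1` and `A (r (t+1)) (c t) = 1` for `t = 0, …, k-2`. -/
def AvoidK1 (m n k : ℕ) (A : ℕ → ℕ → Bool) : Prop :=
  ¬ ∃ r c : ℕ → ℕ,
    (∀ t, t + 1 < k → r t < r (t + 1) ∧ c t < c (t + 1)) ∧
    (∀ t, t < k → 1 ≤ r t ∧ r t ≤ m ∧ 1 ≤ c t ∧ c t ≤ n) ∧
    A (r 0) (c (k - 1)) = true ∧
    (∀ t, t + 1 < k → A (r (t + 1)) (c t) = true)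

/-- `A` is maximal `k12⋯(k-1)`-avoiding. -/
def MaximalAvoidK1 (m n k : ℕ) (A : ℕ → ℕ → Bool) : Prop :=
  AvoidK1 m n k A ∧
    ∀ i j : ℕ, 1 ≤ i → i ≤ m → 1 ≤ j → j ≤ n → A i j = false →
      ¬ AvoidK1 m n k (setOne A i j)

lemma lt_of_forall_lt_succ {β : Type*} [Preorder β] {f : ℕ → β} {k : ℕ} (h : ∀ t, t + 1 < k → f t < f (t + 1))
    {s t : ℕ} (hst : s < t) (htk : t < k) : f s < f t :=
  strictMonoOn_Iic_of_lt_succ (n := k - 1) (fun t ht => by simpa using h t (by omega))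
    (by simp; omega) (by simp; omega) hst

/-- An occurrence of `12⋯ℓ` in `A` strictly below row `i` and strictly left of column `j`. -/
def HasChainBelowLeft (m : ℕ) (A : ℕ → ℕ → Bool) (ℓ i j : ℕ) : Prop :=
  ∃ a b : ℕ → ℕ,
    (∀ t, t + 1 < ℓ → a t < a (t + 1) ∧ b t < b (t + 1)) ∧
    (∀ t, t < ℓ → i < a t ∧ a t ≤ m ∧ 1 ≤ b t ∧ b t < j) ∧
    (∀ t, t < ℓ → A (a t) (b t) = true)

def HasOneAboveRight (n : ℕ) (A : ℕ → ℕ → Bool) (i j : ℕ) : Prop :=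
  ∃ r c, 1 ≤ r ∧ r < i ∧ j < c ∧ c ≤ n ∧ A r c = true

lemma HasChainBelowLeft.mono {m ℓ i j i' j' : ℕ} {A : ℕ → ℕ → Bool}
    (h : HasChainBelowLeft m A ℓ i j) (hi : i' ≤ i) (hj : j ≤ j') :
    HasChainBelowLeft m A ℓ i' j' := by
  obtain ⟨a, b, hinc, hbd, hone⟩ := h
  exact ⟨a, b, hinc, fun t ht => by have := hbd t ht; omega, hone⟩

lemma AvoidK1.not_hasChainBelowLeft {m n k i j : ℕ} {A : ℕ → ℕ → Bool} (hk : 2 ≤ k)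
    (hA : AvoidK1 m n k A) (hi : 1 ≤ i) (hj : j ≤ n) (h1 : A i j = true) :
    ¬ HasChainBelowLeft m A (k - 1) i j := by
  rintro ⟨a, b, hinc, hbd, hone⟩
  have hb0 := hbd 0 (by omega)
  refine hA ⟨fun t => if t = 0 then i else a (t - 1), fun t => if t = k - 1 then j else b t,
    fun t ht => ?_, fun t ht => ?_, by simpa using h1, fun t ht => ?_⟩ <;> dsimp only
  · have hb := hbd t (by omega)
    constructor
    · rcases t with _ | t
      · simpa using hb0.1
      · simpa using (hinc t (by omega)).1
    · rw [if_neg (by omega)]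
      split_ifs
      · exact hb.2.2.2
      · exact (hinc t (by omega)).2
  · refine ⟨?_, ?_, ?_, ?_⟩
    · split_ifs
      · exact hi
      · have := (hbd (t - 1) (by omega)).1; omega
    · split_ifs
      · omega
      · exact (hbd (t - 1) (by omega)).2.1
    · split_ifs
      · omega
      · exact (hbd t (by omega)).2.2.1
    · split_ifs
      · exact hj
      · have := (hbd t (by omega)).2.2.2; omega
  · simpa [show t ≠ k - 1 by omega] using hone t (by omega)

namespace MaximalAvoidK1

lemma hasChainBelowLeft_or_hasOneAboveRight {m n k i j : ℕ} {A : ℕ → ℕ → Bool}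
    (hA : MaximalAvoidK1 m n k A) (hi1 : 1 ≤ i) (hi : i ≤ m) (hj1 : 1 ≤ j) (hj : j ≤ n)
    (h0 : A i j = false) :
    HasChainBelowLeft m A (k - 1) i j ∨ HasOneAboveRight n A i j := by
  obtain ⟨r, c, hinc, hbd, htop, hrest⟩ := not_not.mp (hA.2 i j hi1 hi hj1 hj h0)
  have hr {s t : ℕ} (hst : s < t) (htk : t < k) : r s < r t :=
    lt_of_forall_lt_succ (fun t ht => (hinc t ht).1) hst htk
  have hc {s t : ℕ} (hst : s < t) (htk : t < k) : c s < c t :=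
    lt_of_forall_lt_succ (fun t ht => (hinc t ht).2) hst htk
  by_cases hnew_top : r 0 = i ∧ c (k - 1) = j
  · obtain ⟨rfl, rfl⟩ := hnew_top
    left
    refine ⟨fun t => r (t + 1), c, fun t ht => ⟨(hinc (t + 1) (by omega)).1, (hinc t (by omega)).2⟩,
      fun t ht => ?_, fun t ht => ?_⟩ <;> dsimp only
    · have := hr (by omega : 0 < t + 1) (by omega)
      have := hc (show t < k - 1 by omega) (by omega)
      have := hbd (t + 1) (by omega)
      have := hbd t (by omega)
      omega
    · have := hr (by omega : 0 < t + 1) (by omega)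
      simpa [setOne, show r (t + 1) ≠ r 0 by omega] using hrest t (by omega)
  simp only [setOne, if_neg hnew_top] at htop
  by_cases hnew_inner : ∃ t, t + 1 < k ∧ r (t + 1) = i ∧ c t = j
  · obtain ⟨t, ht, rfl, rfl⟩ := hnew_inner
    right
    exact ⟨r 0, c (k - 1), (hbd 0 (by omega)).1, hr (by omega : 0 < t + 1) ht,
      hc (show t < k - 1 by omega) (by omega), (hbd (k - 1) (by omega)).2.2.2, htop⟩
  push Not at hnew_inner
  refine absurd ⟨r, c, hinc, hbd, htop, fun t ht => ?_⟩ hA.1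
  by_cases hrt : r (t + 1) = i
  · simpa [setOne, hrt, hnew_inner t ht hrt] using hrest t ht
  · simpa [setOne, hrt] using hrest t ht

lemma eq_true_of_not_hasOneAboveRight {m n k i j i' j' : ℕ} {A : ℕ → ℕ → Bool} (hk : 2 ≤ k)
    (hA : MaximalAvoidK1 m n k A) (hi1 : 1 ≤ i) (hi : i ≤ m) (hj1 : 1 ≤ j)
    (hi'1 : 1 ≤ i') (hi' : i' ≤ i) (hj' : j ≤ j') (hj'n : j' ≤ n) (h1 : A i' j' = true)
    (hno : ¬ HasOneAboveRight n A i j) : A i j = true := by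
  by_contra h0
  rcases hA.hasChainBelowLeft_or_hasOneAboveRight hi1 hi hj1 (hj'.trans hj'n)
    (Bool.not_eq_true _ ▸ h0) with hchain | hone
  · exact hA.1.not_hasChainBelowLeft hk hi'1 hj'n h1 (hchain.mono hi' hj')
  · exact hno hone

lemma top_left_eq_true {m n k : ℕ} {A : ℕ → ℕ → Bool} (hk : 2 ≤ k)
    (hA : MaximalAvoidK1 m n k A) (hm : 1 ≤ m) (hn : 1 ≤ n) : A 1 1 = true := by
  by_contra h0
  rcases hA.hasChainBelowLeft_or_hasOneAboveRight le_rfl hm le_rfl hn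
    (Bool.not_eq_true _ ▸ h0) with ⟨a, b, -, hbd, -⟩ | ⟨r, c, hr1, hr, -⟩
  · have := hbd 0 (by omega); omega
  · omega

lemma bottom_right_eq_true {m n k : ℕ} {A : ℕ → ℕ → Bool} (hk : 2 ≤ k)
    (hA : MaximalAvoidK1 m n k A) (hm : 1 ≤ m) (hn : 1 ≤ n) : A m n = true := by
  by_contra h0
  rcases hA.hasChainBelowLeft_or_hasOneAboveRight hm le_rfl hn le_rfl
    (Bool.not_eq_true _ ▸ h0) with ⟨a, b, -, hbd, -⟩ | ⟨r, c, -, -, hc, hcn, -⟩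
  · have := hbd 0 (by omega); omega
  · omega

end MaximalAvoidK1


def lastOne (A : ℕ → ℕ → Bool) (n i : ℕ) : ℕ :=
  Nat.findGreatest (fun j => A i j = true) n

section lastOne

variable {A : ℕ → ℕ → Bool} {n i j : ℕ}

lemma lastOne_le : lastOne A n i ≤ n :=
  Nat.findGreatest_le n

lemma le_lastOne (hj : j ≤ n) (h : A i j = true) : j ≤ lastOne A n i :=
  Nat.le_findGreatest hj h

lemma apply_lastOne (hj : j ≤ n) (h : A i j = true) : A i (lastOne A n i) = true :=
  Nat.findGreatest_spec (P := fun j => A i j = true) hj h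

lemma eq_false_of_lastOne_lt (h : lastOne A n i < j) (hj : j ≤ n) : A i j = false := by
  simpa using Nat.findGreatest_is_greatest h hj

lemma not_hasOneAboveRight_of_lastOne_le (h : ∀ r, 1 ≤ r → r < i → lastOne A n r ≤ j) :
    ¬ HasOneAboveRight n A i j := by
  rintro ⟨r, c, hr1, hri, hjc, hcn, hrc⟩
  have := le_lastOne hcn hrc
  have := h r hr1 hri
  omega

end lastOne

def staircase (A : ℕ → ℕ → Bool) (n i : ℕ) : ℕ :=
  if i = 0 then 1 else lastOne A n i

lemma staircase_of_ne_zero {A : ℕ → ℕ → Bool} {n i : ℕ} (hi : i ≠ 0) :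
    staircase A n i = lastOne A n i :=
  if_neg hi

namespace MaximalAvoidK1

variable {m n k i j : ℕ} {A : ℕ → ℕ → Bool}

lemma apply_lastOne_and_lastOne_le (hk : 2 ≤ k) (hA : MaximalAvoidK1 m n k A) (hn : 1 ≤ n)
    (hi1 : 1 ≤ i) (hi : i ≤ m) :
    A i (lastOne A n i) = true ∧ ∀ r, 1 ≤ r → r ≤ i → lastOne A n r ≤ lastOne A n i := by
  have h11 := hA.top_left_eq_true hk (hi1.trans hi) hn
  induction i, hi1 using Nat.le_induction with
  | base => exact ⟨apply_lastOne hn h11, fun r hr1 hr => by rw [show r = 1 by omega]⟩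
  | succ i hi1 ih =>
    obtain ⟨hrow, hmax⟩ := ih (by omega)
    have hpos : 1 ≤ lastOne A n i := (le_lastOne hn h11).trans (hmax 1 le_rfl hi1)
    have hbelow : A (i + 1) (lastOne A n i) = true :=
      hA.eq_true_of_not_hasOneAboveRight hk (by omega) hi hpos hi1 (by omega) le_rfl lastOne_le
        hrow (not_hasOneAboveRight_of_lastOne_le fun r hr1 hr => hmax r hr1 (by omega))
    have hstep := le_lastOne lastOne_le hbelow
    refine ⟨apply_lastOne lastOne_le hbelow, fun r hr1 hr => ?_⟩
    rcases hr.lt_or_eq with hr | rfl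
    · exact (hmax r hr1 (by omega)).trans hstep
    · exact le_rfl

lemma apply_lastOne_eq_true (hk : 2 ≤ k) (hA : MaximalAvoidK1 m n k A) (hn : 1 ≤ n)
    (hi1 : 1 ≤ i) (hi : i ≤ m) : A i (lastOne A n i) = true :=
  (hA.apply_lastOne_and_lastOne_le hk hn hi1 hi).1

lemma lastOne_le_lastOne (hk : 2 ≤ k) (hA : MaximalAvoidK1 m n k A) (hn : 1 ≤ n)
    {r : ℕ} (hr1 : 1 ≤ r) (hri : r ≤ i) (hi : i ≤ m) : lastOne A n r ≤ lastOne A n i :=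
  (hA.apply_lastOne_and_lastOne_le hk hn (hr1.trans hri) hi).2 r hr1 hri

lemma one_le_staircase (hk : 2 ≤ k) (hA : MaximalAvoidK1 m n k A) (hn : 1 ≤ n) (hi : i ≤ m) :
    1 ≤ staircase A n i := by
  rcases Nat.eq_zero_or_pos i with rfl | hi1
  · exact le_rfl
  rw [staircase_of_ne_zero hi1.ne']
  exact (le_lastOne hn (hA.top_left_eq_true hk (by omega) hn)).trans
    (hA.lastOne_le_lastOne hk hn le_rfl hi1 hi)

lemma eq_true_of_staircase_le (hk : 2 ≤ k) (hA : MaximalAvoidK1 m n k A) (hn : 1 ≤ n)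
    (hi1 : 1 ≤ i) (hi : i ≤ m) (hj1 : staircase A n (i - 1) ≤ j) (hj : j ≤ lastOne A n i) :
    A i j = true := by
  refine hA.eq_true_of_not_hasOneAboveRight hk hi1 hi
    ((hA.one_le_staircase hk hn (by omega)).trans hj1) hi1 le_rfl hj lastOne_le
    (hA.apply_lastOne_eq_true hk hn hi1 hi) (not_hasOneAboveRight_of_lastOne_le fun r hr1 hr => ?_)
  rw [staircase_of_ne_zero (by omega)] at hj1
  exact (hA.lastOne_le_lastOne hk hn hr1 (by omega) (by omega)).trans hj1

end MaximalAvoidK1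

theorem stmt_12_general (m n k : ℕ) (hk : 3 ≤ k) (hm : k ≤ m) (hn : k ≤ n)
    (A : ℕ → ℕ → Bool) (hA : MaximalAvoidK1 m n k A) :
    ∃ p : ℕ → ℕ, p 0 = 1 ∧ 1 ≤ p 1 ∧
      (∀ i : ℕ, 1 ≤ i → i < m → p i ≤ p (i + 1)) ∧ p m = n ∧
      ∀ i : ℕ, 1 ≤ i → i ≤ m →
        (∀ j : ℕ, p (i - 1) ≤ j → j ≤ p i → A i j = true) ∧
        (∀ j : ℕ, p i < j → j ≤ n → A i j = false) := by
  have hk2 : 2 ≤ k := by omega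
  have hm1 : 1 ≤ m := by omega
  have hn1 : 1 ≤ n := by omega
  refine ⟨staircase A n, rfl, hA.one_le_staircase hk2 hn1 hm1, fun i hi1 hi => ?_, ?_,
    fun i hi1 hi => ⟨fun j hj1 hj => ?_, fun j hj hjn => ?_⟩⟩
  · rw [staircase_of_ne_zero (by omega), staircase_of_ne_zero (by omega)]
    exact hA.lastOne_le_lastOne hk2 hn1 hi1 (by omega) hi
  · rw [staircase_of_ne_zero (by omega)]
    exact le_antisymm lastOne_le (le_lastOne le_rfl (hA.bottom_right_eq_true hk2 hm1 hn1))
  · rw [staircase_of_ne_zero (by omega)] at hj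
    exact hA.eq_true_of_staircase_le hk2 hn1 hi1 hi hj1 hj
  · rw [staircase_of_ne_zero (by omega)] at hj
    exact eq_false_of_lastOne_lt hj hjn

theorem stmt_12 (m n k : ℕ) (hk : 3 ≤ k) (hm : k ≤ m) (hn : k ≤ n)
    (A : ℕ → ℕ → Bool) (hA : MaximalAvoidK1 m n k A) (h1n : A 1 n = false) :
    ∃ p : ℕ → ℕ, p 0 = 1 ∧ 1 ≤ p 1 ∧
      (∀ i : ℕ, 1 ≤ i → i < m → p i ≤ p (i + 1)) ∧ p m = n ∧
      ∀ i : ℕ, 1 ≤ i → i ≤ m →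
        (∀ j : ℕ, p (i - 1) ≤ j → j ≤ p i → A i j = true) ∧
        (∀ j : ℕ, p i < j → j ≤ n → A i j = false) :=
  stmt_12_general m n k hk hm hn A hA
end

section
/- Let m, n ≥ 3. There exists a 312-avoiding m×n (0,1)-matrix with exactly 2(m + n − 2) ones; hence the maximum number of 1's of a 312-avoiding m×n (0,1)-matrix equals 2(m + n − 2). -/
/-!
In every column, the two topmost ones contribute at most `2 n` ones in total. Every other one is
charged to the row of the nearest one above it in its column; that row lies in `2, …, m - 1`,
because there is yet another one above it. Ones charged to the same row `r` lie in distinct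
columns, and if three of them sat in columns `a < b < c`, then a one above row `r` in column `c`,
the one in row `r` and column `a`, and the charged one in column `b` (which lies below row `r`)
would form a `312` pattern. So every row is charged at most twice, and there are at most
`2 n + 2 (m - 2)` ones. Equality is attained by filling the first two columns and the last two rows.
-/

open Finset

theorem Finset.card_le_two_of_forall_not_lt_lt {ι α : Type*} [LinearOrder α] {s : Finset ι}
    {f : ι → α} (hf : Set.InjOn f s)
    (h : ∀ x ∈ s, ∀ y ∈ s, ∀ z ∈ s, f x < f y → f y < f z → False) : #s ≤ 2 := by
  rw [← card_image_of_injOn hf]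
  by_contra! hcard
  set e := (s.image f).orderEmbOfFin rfl
  have he (k : Fin #(s.image f)) : ∃ x ∈ s, f x = e k := mem_image.mp (orderEmbOfFin_mem _ rfl k)
  obtain ⟨x, hx, hxe⟩ := he ⟨0, by omega⟩
  obtain ⟨y, hy, hye⟩ := he ⟨1, by omega⟩
  obtain ⟨z, hz, hze⟩ := he ⟨2, by omega⟩
  refine h x hx y hy z hz ?_ ?_
  · rw [hxe, hye]; exact e.strictMono (by simp)
  · rw [hye, hze]; exact e.strictMono (by simp)

section OnesAbove

variable (A : ℕ → ℕ → Bool)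

def onesFinset (m n : ℕ) : Finset (ℕ × ℕ) :=
  (Icc 1 m ×ˢ Icc 1 n).filter fun p => A p.1 p.2 = true

def onesAbove (i j : ℕ) : Finset ℕ := (Ico 1 i).filter fun r => A r j = true

/-- `0` when there is no one above position `(i, j)`. -/
def nearestOneAbove (i j : ℕ) : ℕ := (onesAbove A i j).sup id

variable {A}

theorem onesCount_eq_card_onesFinset (m n : ℕ) : onesCount m n A = #(onesFinset A m n) := rfl

theorem mem_onesFinset {m n : ℕ} {x : ℕ × ℕ} :
    x ∈ onesFinset A m n ↔ (1 ≤ x.1 ∧ x.1 ≤ m) ∧ (1 ≤ x.2 ∧ x.2 ≤ n) ∧ A x.1 x.2 = true := by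
  simp [onesFinset, and_assoc]

theorem mem_onesAbove {i j r : ℕ} : r ∈ onesAbove A i j ↔ (1 ≤ r ∧ r < i) ∧ A r j = true := by
  simp [onesAbove]

theorem nearestOneAbove_lt {i j : ℕ} (hi : 1 ≤ i) : nearestOneAbove A i j < i :=
  (Finset.sup_lt_iff (show ⊥ < i from hi)).mpr fun _ hr => (mem_onesAbove.mp hr).1.2

variable {m n : ℕ} {x y : ℕ × ℕ}

theorem mem_onesAbove_of_lt (hx : x ∈ onesFinset A m n) (hcol : x.2 = y.2) (hlt : x.1 < y.1) :
    x.1 ∈ onesAbove A y.1 y.2 := by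
  rw [mem_onesFinset] at hx
  exact mem_onesAbove.mpr ⟨⟨hx.1.1, hlt⟩, hcol ▸ hx.2.2⟩

theorem card_onesAbove_lt (hx : x ∈ onesFinset A m n) (hcol : x.2 = y.2) (hlt : x.1 < y.1) :
    #(onesAbove A x.1 x.2) < #(onesAbove A y.1 y.2) := by
  refine card_lt_card <| (ssubset_iff_of_subset fun r hr => ?_).mpr
    ⟨x.1, mem_onesAbove_of_lt hx hcol hlt, by simp [mem_onesAbove]⟩
  rw [mem_onesAbove, ← hcol] at *
  exact ⟨⟨hr.1.1, hr.1.2.trans hlt⟩, hr.2⟩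

theorem nearestOneAbove_lt_nearestOneAbove (hx : x ∈ onesFinset A m n) (hcol : x.2 = y.2)
    (hlt : x.1 < y.1) : nearestOneAbove A x.1 x.2 < nearestOneAbove A y.1 y.2 :=
  (nearestOneAbove_lt (mem_onesFinset.mp hx).1.1).trans_le <|
    le_sup (f := id) (mem_onesAbove_of_lt hx hcol hlt)

theorem eq_of_snd_eq_of_apply_eq {g : ℕ × ℕ → ℕ}
    (hg : ∀ x y, x ∈ onesFinset A m n → x.2 = y.2 → x.1 < y.1 → g x < g y)
    (hx : x ∈ onesFinset A m n) (hy : y ∈ onesFinset A m n) (hcol : x.2 = y.2)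
    (hgxy : g x = g y) : x = y := by
  rcases lt_trichotomy x.1 y.1 with h | h | h
  · exact absurd hgxy (hg x y hx hcol h).ne
  · exact Prod.ext h hcol
  · exact absurd hgxy (hg y x hy hcol.symm h).ne'

theorem nearestOneAbove_mem {i j : ℕ} (h : (onesAbove A i j).Nonempty) :
    nearestOneAbove A i j ∈ onesAbove A i j := by
  obtain ⟨r, hr, hsup⟩ := exists_mem_eq_sup _ h id
  rwa [nearestOneAbove, hsup]

theorem exists_mem_onesAbove_lt_nearestOneAbove {i j : ℕ} (h : 2 ≤ #(onesAbove A i j)) :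
    ∃ r ∈ onesAbove A i j, r < nearestOneAbove A i j := by
  obtain ⟨r, hr, hne⟩ := exists_mem_ne (by omega : 1 < #(onesAbove A i j)) (nearestOneAbove A i j)
  exact ⟨r, hr, lt_of_le_of_ne (le_sup (f := id) hr) hne⟩

end OnesAbove

theorem card_filter_not_two_le_card_onesAbove_le (m n : ℕ) (A : ℕ → ℕ → Bool) :
    #((onesFinset A m n).filter fun x => ¬ 2 ≤ #(onesAbove A x.1 x.2)) ≤ 2 * n := by
  have hcol : ∀ x ∈ (onesFinset A m n).filter (fun x => ¬ 2 ≤ #(onesAbove A x.1 x.2)),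
      x.2 ∈ Icc 1 n := fun x hx =>
    mem_Icc.mpr (mem_onesFinset.mp (mem_filter.mp hx).1).2.1
  simpa using card_le_mul_card_image_of_maps_to hcol 2 fun j _ => by
    refine (card_le_card_of_injOn (fun x => #(onesAbove A x.1 x.2)) (t := range 2)
      (fun x hx => ?_) fun x hx y hy hxy => ?_).trans (by simp)
    · simp only [coe_filter, mem_filter, Set.mem_ofPred_eq, coe_range, Set.mem_Iio] at hx ⊢
      omega
    · simp only [coe_filter, mem_filter, Set.mem_ofPred_eq] at hx hy
      exact eq_of_snd_eq_of_apply_eq (fun x y hx => card_onesAbove_lt hx) hx.1.1 hy.1.1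
        (hx.2.trans hy.2.symm) hxy

namespace Avoid312

variable {m n : ℕ} {A : ℕ → ℕ → Bool}

theorem card_fiber_nearestOneAbove_le_two (hA : Avoid312 m n A) (r : ℕ) :
    #((onesFinset A m n).filter fun x =>
      2 ≤ #(onesAbove A x.1 x.2) ∧ nearestOneAbove A x.1 x.2 = r) ≤ 2 := by
  refine card_le_two_of_forall_not_lt_lt (f := Prod.snd) (fun x hx y hy hxy => ?_)
    fun x hx y hy z hz hxy hyz => ?_
  · simp only [coe_filter, Set.mem_ofPred_eq] at hx hy
    exact eq_of_snd_eq_of_apply_eq (fun x y hx => nearestOneAbove_lt_nearestOneAbove hx)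
      hx.1 hy.1 hxy (hx.2.2.trans hy.2.2.symm)
  · simp only [mem_filter] at hx hy hz
    obtain ⟨hx, hx₂, rfl⟩ := hx
    obtain ⟨hy, -, hyr⟩ := hy
    obtain ⟨hz, hz₂, hzr⟩ := hz
    obtain ⟨p, hp, hpr⟩ := exists_mem_onesAbove_lt_nearestOneAbove hz₂
    have hr := mem_onesAbove.mp <| nearestOneAbove_mem <|
      card_pos.mp (by omega : 0 < #(onesAbove A x.1 x.2))
    have hry := nearestOneAbove_lt (A := A) (j := y.2) (mem_onesFinset.mp hy).1.1
    rw [mem_onesFinset] at hx hy hz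
    rw [mem_onesAbove] at hp
    exact hA ⟨p, _, y.1, x.2, y.2, z.2, hp.1.1, by omega, by omega, hy.1.2, hx.2.1.1, hxy, hyz,
      hz.2.1.2, hp.2, hr.2, hy.2.2⟩

theorem card_filter_two_le_card_onesAbove_le (hA : Avoid312 m n A) :
    #((onesFinset A m n).filter fun x => 2 ≤ #(onesAbove A x.1 x.2)) ≤ 2 * (m - 2) := by
  have hrow : ∀ x ∈ (onesFinset A m n).filter (fun x => 2 ≤ #(onesAbove A x.1 x.2)),
      nearestOneAbove A x.1 x.2 ∈ Icc 2 (m - 1) := fun x hx => by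
    obtain ⟨hx, hx₂⟩ := mem_filter.mp hx
    obtain ⟨p, hp, hpr⟩ := exists_mem_onesAbove_lt_nearestOneAbove hx₂
    have hx₁ := (mem_onesFinset.mp hx).1
    have := nearestOneAbove_lt (A := A) (j := x.2) hx₁.1
    have := (mem_onesAbove.mp hp).1.1
    rw [mem_Icc]
    omega
  have := card_le_mul_card_image_of_maps_to hrow 2 fun r _ => by
    rw [filter_filter]
    exact card_fiber_nearestOneAbove_le_two hA r
  rw [Nat.card_Icc] at this
  omega

theorem onesCount_le (hm : 2 ≤ m) (hA : Avoid312 m n A) : onesCount m n A ≤ 2 * (m + n - 2) := by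
  have := card_filter_add_card_filter_not (s := onesFinset A m n)
    (p := fun x => 2 ≤ #(onesAbove A x.1 x.2))
  have := card_filter_two_le_card_onesAbove_le hA
  have := card_filter_not_two_le_card_onesAbove_le m n A
  rw [onesCount_eq_card_onesFinset]
  omega

end Avoid312

def firstColumnsLastRows (m : ℕ) : ℕ → ℕ → Bool := fun i j => decide (j ≤ 2 ∨ m - 1 ≤ i)

theorem avoid312_firstColumnsLastRows (m n : ℕ) : Avoid312 m n (firstColumnsLastRows m) := by
  rintro ⟨r₁, r₂, r₃, c₁, c₂, c₃, -, h₁₂, h₂₃, h₃, h₁, hc₁₂, hc₂₃, -, h, -, -⟩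
  simp only [firstColumnsLastRows, decide_eq_true_eq] at h
  omega

theorem onesCount_firstColumnsLastRows {m n : ℕ} (hm : 2 ≤ m) (hn : 2 ≤ n) :
    onesCount m n (firstColumnsLastRows m) = 2 * (m + n - 2) := by
  have hones : onesFinset (firstColumnsLastRows m) m n =
      Icc 1 m ×ˢ Icc 1 2 ∪ Icc (m - 1) m ×ˢ Icc 3 n := by
    ext ⟨i, j⟩
    simp only [mem_onesFinset, firstColumnsLastRows, mem_union, mem_product, mem_Icc,
      decide_eq_true_eq]
    omega
  have hdisj : Disjoint (Icc 1 m ×ˢ Icc 1 2) (Icc (m - 1) m ×ˢ Icc 3 n) :=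
    disjoint_left.mpr fun x h₁ h₂ => by
      simp only [mem_product, mem_Icc] at h₁ h₂
      omega
  rw [onesCount_eq_card_onesFinset, hones, card_union_of_disjoint hdisj, card_product,
    card_product, Nat.card_Icc, Nat.card_Icc, Nat.card_Icc, Nat.card_Icc,
    show m + 1 - (m - 1) = 2 by omega]
  omega

theorem stmt_14 (m n : ℕ) (hm : 3 ≤ m) (hn : 3 ≤ n) :
    (∃ A : ℕ → ℕ → Bool, Avoid312 m n A ∧ onesCount m n A = 2 * (m + n - 2)) ∧
    IsGreatest {c : ℕ | ∃ A : ℕ → ℕ → Bool, Avoid312 m n A ∧ onesCount m n A = c}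
      (2 * (m + n - 2)) := by
  have hextremal : Avoid312 m n (firstColumnsLastRows m) ∧
      onesCount m n (firstColumnsLastRows m) = 2 * (m + n - 2) :=
    ⟨avoid312_firstColumnsLastRows m n, onesCount_firstColumnsLastRows (by omega) (by omega)⟩
  refine ⟨⟨_, hextremal⟩, ⟨_, hextremal⟩, ?_⟩
  rintro _ ⟨A, hA, rfl⟩
  exact hA.onesCount_le (by omega)
end

section
/- Let m, n ≥ 3. Every maximal 312-avoiding m×n (0,1)-matrix contains exactly 2(m + n − 2) ones. -/
open Finset

variable {m n : ℕ} {A : ℕ → ℕ → Bool}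

theorem Avoid312.elim (hA : Avoid312 m n A) {r₁ r₂ r₃ c₁ c₂ c₃ : ℕ}
    (hr : 1 ≤ r₁ ∧ r₁ < r₂ ∧ r₂ < r₃ ∧ r₃ ≤ m) (hc : 1 ≤ c₁ ∧ c₁ < c₂ ∧ c₂ < c₃ ∧ c₃ ≤ n)
    (h₁ : A r₁ c₃ = true) (h₂ : A r₂ c₁ = true) (h₃ : A r₃ c₂ = true) : False :=
  hA ⟨r₁, r₂, r₃, c₁, c₂, c₃, hr.1, hr.2.1, hr.2.2.1, hr.2.2.2, hc.1, hc.2.1, hc.2.2.1, hc.2.2.2,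
    h₁, h₂, h₃⟩

/-- `(i, j)` is the top, middle or bottom entry of the 312 pattern created by setting it to `1`. -/
theorem MaximalAvoid312.exists_pattern_of_eq_false (hA : MaximalAvoid312 m n A) {i j : ℕ}
    (hi : 1 ≤ i) (him : i ≤ m) (hj : 1 ≤ j) (hjn : j ≤ n) (h0 : A i j = false) :
    (∃ r₂ r₃ c₁ c₂, (i < r₂ ∧ r₂ < r₃ ∧ r₃ ≤ m ∧ 1 ≤ c₁ ∧ c₁ < c₂ ∧ c₂ < j) ∧
        A r₂ c₁ = true ∧ A r₃ c₂ = true) ∨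
    (∃ r₁ r₃ c₂ c₃, (1 ≤ r₁ ∧ r₁ < i ∧ i < r₃ ∧ r₃ ≤ m ∧ j < c₂ ∧ c₂ < c₃ ∧ c₃ ≤ n) ∧
        A r₁ c₃ = true ∧ A r₃ c₂ = true) ∨
    (∃ r₁ r₂ c₁ c₃, (1 ≤ r₁ ∧ r₁ < r₂ ∧ r₂ < i ∧ 1 ≤ c₁ ∧ c₁ < j ∧ j < c₃ ∧ c₃ ≤ n) ∧
        A r₁ c₃ = true ∧ A r₂ c₁ = true) := by
  have hset : ∀ {r c}, setOne A i j r c = true → (r = i ∧ c = j) ∨ A r c = true := by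
    intro r c h
    unfold setOne at h
    split_ifs at h with hrc
    exacts [Or.inl hrc, Or.inr h]
  have hpat := hA.2 i j hi him hj hjn h0
  rw [Avoid312, not_not] at hpat
  obtain ⟨r₁, r₂, r₃, c₁, c₂, c₃, h1, h2, h3, h4, h5, h6, h7, h8, ha, hb, hc⟩ := hpat
  rcases hset ha with ⟨rfl, rfl⟩ | ha' <;> rcases hset hb with ⟨rfl, rfl⟩ | hb' <;>
    rcases hset hc with ⟨rfl, rfl⟩ | hc'
  · omega
  · omega
  · omega
  · exact Or.inl ⟨r₂, r₃, c₁, c₂, by omega, hb', hc'⟩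
  · omega
  · exact Or.inr (Or.inl ⟨r₁, r₃, c₂, c₃, by omega, ha', hc'⟩)
  · exact Or.inr (Or.inr ⟨r₁, r₂, c₁, c₃, by omega, ha', hb'⟩)
  · exact (hA.1.elim (by omega) (by omega) ha' hb' hc').elim

namespace MaximalAvoid312

theorem apply_first_row (hA : MaximalAvoid312 m n A) (hm : 1 ≤ m) {j : ℕ} (hj : 1 ≤ j) (hj2 : j ≤ 2)
    (hjn : j ≤ n) : A 1 j = true := by
  by_contra h0
  rcases hA.exists_pattern_of_eq_false le_rfl hm hj hjn (by simpa using h0) with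
    ⟨_, _, _, _, h, -⟩ | ⟨_, _, _, _, h, -⟩ | ⟨_, _, _, _, h, -⟩ <;> omega

theorem apply_last_row (hA : MaximalAvoid312 m n A) (hm : 1 ≤ m) (hn : 1 ≤ n) {j : ℕ}
    (hj : j = 1 ∨ j = n) : A m j = true := by
  by_contra h0
  rcases hA.exists_pattern_of_eq_false hm le_rfl (j := j) (by omega) (by omega)
      (by simpa using h0) with
    ⟨_, _, _, _, h, -⟩ | ⟨_, _, _, _, h, -⟩ | ⟨_, _, _, _, h, -⟩ <;> omega

theorem apply_last_col (hA : MaximalAvoid312 m n A) (hn : 1 ≤ n) {i : ℕ} (hi : 1 ≤ i)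
    (him : i ≤ m) (him' : m ≤ i + 1) : A i n = true := by
  by_contra h0
  rcases hA.exists_pattern_of_eq_false hi him hn le_rfl (by simpa using h0) with
    ⟨_, _, _, _, h, -⟩ | ⟨_, _, _, _, h, -⟩ | ⟨_, _, _, _, h, -⟩ <;> omega

end MaximalAvoid312

def HasOneLeft (A : ℕ → ℕ → Bool) (i c : ℕ) : Prop :=
  ∃ j, 1 ≤ j ∧ j < c ∧ A i j = true

def HasOneRight (A : ℕ → ℕ → Bool) (n i c : ℕ) : Prop :=
  ∃ j, c < j ∧ j ≤ n ∧ A i j = true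

def IsInteriorOne (A : ℕ → ℕ → Bool) (n i c : ℕ) : Prop :=
  A i c = true ∧ HasOneLeft A i c ∧ HasOneRight A n i c

namespace MaximalAvoid312

variable {c u v : ℕ}

theorem hasOneRight_of_lt (hA : MaximalAvoid312 m n A) {p : ℕ} (hp : 1 ≤ p) (hpv : p < v)
    (hvm : v ≤ m) (hright : HasOneRight A n p c) : HasOneRight A n v c := by
  classical
  obtain ⟨j, hcj, hjn, hpj⟩ := hright
  set P := fun k => ∃ r, 1 ≤ r ∧ r < v ∧ A r k = true
  have hPj : P j := ⟨p, hp, hpv, hpj⟩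
  -- The rightmost column `q` reached by a one above row `v` also has a one in row `v`.
  set q := Nat.findGreatest P n
  have hjq : j ≤ q := Nat.le_findGreatest hjn hPj
  have hqn : q ≤ n := Nat.findGreatest_le n
  obtain ⟨w, hw, hwv, hwq⟩ : P q := Nat.findGreatest_spec hjn hPj
  have hmax : ∀ r, 1 ≤ r → r < v → ¬HasOneRight A n r q := fun r hr hrv ⟨k, hqk, hkn, hrk⟩ =>
    Nat.findGreatest_is_greatest hqk hkn ⟨r, hr, hrv, hrk⟩
  refine ⟨q, by omega, hqn, ?_⟩
  by_contra h0
  rcases hA.exists_pattern_of_eq_false (i := v) (j := q) (by omega) hvm (by omega) hqn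
      (by simpa using h0) with
    ⟨r₂, r₃, c₁, c₂, h, hb, hc⟩ | ⟨r₁, _, _, c₃, h, ha, -⟩ | ⟨r₁, _, _, c₃, h, ha, -⟩
  · exact hA.1.elim (by omega) (by omega) hwq hb hc
  · exact hmax r₁ (by omega) (by omega) ⟨c₃, by omega, by omega, ha⟩
  · exact hmax r₁ (by omega) (by omega) ⟨c₃, by omega, by omega, ha⟩

theorem apply_eq_true_of_first_hasOneRight (hA : MaximalAvoid312 m n A) (hu : 1 ≤ u)
    (hum : u ≤ m)
    (hright : HasOneRight A n u c) (hmin : ∀ r, 1 ≤ r → r < u → ¬HasOneRight A n r c)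
    (hc : 1 ≤ c) : A u c = true := by
  obtain ⟨j, hcj, hjn, huj⟩ := hright
  by_contra h0
  rcases hA.exists_pattern_of_eq_false hu hum hc (by omega) (by simpa using h0) with
    ⟨r₂, r₃, c₁, c₂, h, hb, hc⟩ | ⟨r₁, _, _, c₃, h, ha, -⟩ | ⟨r₁, _, _, c₃, h, ha, -⟩
  · exact hA.1.elim (by omega) (by omega) huj hb hc
  · exact hmin r₁ (by omega) (by omega) ⟨c₃, by omega, by omega, ha⟩
  · exact hmin r₁ (by omega) (by omega) ⟨c₃, by omega, by omega, ha⟩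

theorem hasOneLeft_of_first_hasOneRight (hA : MaximalAvoid312 m n A) (hu : 1 ≤ u)
    (hum : u ≤ m)
    (hright : HasOneRight A n u c) (hmin : ∀ r, 1 ≤ r → r < u → ¬HasOneRight A n r c)
    (hc : 2 ≤ c) : HasOneLeft A u c := by
  classical
  obtain ⟨j, hcj, hjn, huj⟩ := hright
  by_contra hleft
  set P := fun k => k = 1 ∨ ∃ w, u < w ∧ w ≤ m ∧ A w k = true
  have hP1 : P 1 := Or.inl rfl
  -- The zero at the rightmost column `s < c` that is column `1` or has a one below row `u`
  -- fits no pattern.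
  set s := Nat.findGreatest P (c - 1)
  have hs : 1 ≤ s := Nat.le_findGreatest (by omega) hP1
  have hsc : s ≤ c - 1 := Nat.findGreatest_le _
  have hPs : P s := Nat.findGreatest_spec (by omega) hP1
  have h0 : A u s = false := by simpa using fun h => hleft ⟨s, hs, by omega, h⟩
  rcases hA.exists_pattern_of_eq_false hu hum hs (by omega) h0 with
    ⟨r₂, r₃, c₁, c₂, h, hb, hc⟩ | ⟨r₁, r₃, c₂, c₃, h, ha, hc⟩ | ⟨r₁, r₂, c₁, c₃, h, ha, hb⟩
  · exact hA.1.elim (by omega) (by omega) huj hb hc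
  · have hc₃ : c₃ ≤ c := by
      by_contra! hc₃
      exact hmin r₁ (by omega) (by omega) ⟨c₃, hc₃, by omega, ha⟩
    exact Nat.findGreatest_is_greatest (show s < c₂ by omega) (by omega)
      (Or.inr ⟨r₃, by omega, by omega, hc⟩)
  · obtain hs1 | ⟨w, huw, hwm, hws⟩ := hPs
    · omega
    · exact hA.1.elim (by omega) (by omega) ha hb hws

theorem apply_eq_true_of_first_hasOneLeft (hA : MaximalAvoid312 m n A) (hu : 1 ≤ u)
    (hmin_u : ∀ r, 1 ≤ r → r < u → ¬HasOneRight A n r c) (huv : u < v) (hvm : v ≤ m)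
    (hleft : HasOneLeft A v c) (hright : HasOneRight A n v c)
    (hmin_v : ∀ r, u < r → r < v → ¬HasOneLeft A r c) : A v c = true := by
  obtain ⟨l, hl, hlc, hvl⟩ := hleft
  obtain ⟨j, hcj, hjn, hvj⟩ := hright
  by_contra h0
  rcases hA.exists_pattern_of_eq_false (i := v) (j := c) (by omega) hvm (by omega) (by omega)
      (by simpa using h0) with
    ⟨r₂, r₃, c₁, c₂, h, hb, hc⟩ | ⟨r₁, r₃, c₂, c₃, h, ha, hc⟩ | ⟨r₁, r₂, c₁, c₃, h, ha, hb⟩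
  · exact hA.1.elim (by omega) (by omega) hvj hb hc
  · exact hA.1.elim (by omega) (by omega) ha hvl hc
  · by_cases hur : u < r₂
    · exact hmin_v r₂ hur (by omega) ⟨c₁, by omega, by omega, hb⟩
    · exact hmin_u r₁ (by omega) (by omega) ⟨c₃, by omega, by omega, ha⟩

end MaximalAvoid312

theorem Avoid312.eq_or_eq_of_isInteriorOne (hA : Avoid312 m n A) {c u v i : ℕ} (hu : 1 ≤ u)
    (hright : HasOneRight A n u c) (hmin_u : ∀ r, 1 ≤ r → r < u → ¬HasOneRight A n r c)
    (huv : u < v) (hleft : HasOneLeft A v c) (hmin_v : ∀ r, u < r → r < v → ¬HasOneLeft A r c)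
    (hi : 1 ≤ i) (him : i ≤ m) (h : IsInteriorOne A n i c) : i = u ∨ i = v := by
  obtain ⟨hic, hileft, hiright⟩ := h
  obtain ⟨j, hcj, hjn, huj⟩ := hright
  obtain ⟨l, hl, hlc, hvl⟩ := hleft
  rcases lt_trichotomy i u with hiu | rfl | hui
  · exact (hmin_u i hi hiu hiright).elim
  · exact Or.inl rfl
  rcases lt_trichotomy i v with hiv | rfl | hvi
  · exact (hmin_v i hui hiv hileft).elim
  · exact Or.inr rfl
  · exact (hA.elim (by omega) (by omega) huj hvl hic).elim

open scoped Classical in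
theorem MaximalAvoid312.exists_interiorRows_eq_pair (hA : MaximalAvoid312 m n A) (hm : 2 ≤ m)
    {c : ℕ} (hc : 1 < c) (hcn : c < n) :
    ∃ u v, u < v ∧ {i ∈ Icc 1 m | IsInteriorOne A n i c} = {u, v} := by
  have hlast : HasOneRight A n (m - 1) c :=
    ⟨n, hcn, le_rfl, hA.apply_last_col (by omega) (by omega) (by omega) (by omega)⟩
  have hex_u : ∃ u, 1 ≤ u ∧ HasOneRight A n u c := ⟨m - 1, by omega, hlast⟩
  obtain ⟨hu, hright_u⟩ := Nat.find_spec hex_u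
  set u := Nat.find hex_u
  have hum : u < m := by
    have := Nat.find_min' hex_u ⟨(by omega : 1 ≤ m - 1), hlast⟩
    omega
  have hmin_u : ∀ r, 1 ≤ r → r < u → ¬HasOneRight A n r c := fun r hr hru h =>
    Nat.find_min hex_u hru ⟨hr, h⟩
  have hex_v : ∃ v, u < v ∧ v ≤ m ∧ HasOneLeft A v c :=
    ⟨m, hum, le_rfl, ⟨1, le_rfl, hc, hA.apply_last_row (by omega) (by omega) (Or.inl rfl)⟩⟩
  obtain ⟨huv, hvm, hleft_v⟩ := Nat.find_spec hex_v
  set v := Nat.find hex_v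
  have hmin_v : ∀ r, u < r → r < v → ¬HasOneLeft A r c := fun r hur hrv h =>
    Nat.find_min hex_v hrv ⟨hur, by omega, h⟩
  have hright_v := hA.hasOneRight_of_lt hu huv hvm hright_u
  have hint_u : IsInteriorOne A n u c :=
    ⟨hA.apply_eq_true_of_first_hasOneRight hu hum.le hright_u hmin_u (by omega),
      hA.hasOneLeft_of_first_hasOneRight hu hum.le hright_u hmin_u (by omega), hright_u⟩
  have hint_v : IsInteriorOne A n v c :=
    ⟨hA.apply_eq_true_of_first_hasOneLeft hu hmin_u huv hvm hleft_v hright_v hmin_v,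
      hleft_v, hright_v⟩
  refine ⟨u, v, huv, ?_⟩
  ext i
  simp only [mem_filter, mem_Icc, mem_insert, mem_singleton]
  constructor
  · rintro ⟨⟨hi, him⟩, hint⟩
    exact hA.1.eq_or_eq_of_isInteriorOne hu hright_u hmin_u huv hleft_v hmin_v hi him hint
  · rintro (rfl | rfl)
    exacts [⟨⟨hu, hum.le⟩, hint_u⟩, ⟨⟨by omega, hvm⟩, hint_v⟩]

/-- Reflection of an `m × n` matrix in its anti-diagonal; the permutation 312 is invariant under
this symmetry (inverse composed with reverse-complement). -/
def antiTranspose (m n : ℕ) (A : ℕ → ℕ → Bool) : ℕ → ℕ → Bool :=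
  fun i j => A (m + 1 - j) (n + 1 - i)

theorem Avoid312.of_le_antiTranspose {B : ℕ → ℕ → Bool} (hA : Avoid312 m n A)
    (hB : ∀ i j, 1 ≤ i → i ≤ n → 1 ≤ j → j ≤ m → B i j = true → antiTranspose m n A i j = true) :
    Avoid312 n m B := by
  rintro ⟨r₁, r₂, r₃, c₁, c₂, c₃, h1, h2, h3, h4, h5, h6, h7, h8, ha, hb, hc⟩
  exact hA.elim (r₁ := m + 1 - c₃) (r₂ := m + 1 - c₂) (r₃ := m + 1 - c₁) (by omega) (by omega)
    (hB _ _ (by omega) (by omega) (by omega) (by omega) ha)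
    (hB _ _ (by omega) (by omega) (by omega) (by omega) hc)
    (hB _ _ (by omega) (by omega) (by omega) (by omega) hb)

theorem MaximalAvoid312.antiTranspose (hA : MaximalAvoid312 m n A) :
    MaximalAvoid312 n m (antiTranspose m n A) := by
  refine ⟨hA.1.of_le_antiTranspose fun _ _ _ _ _ _ h => h, fun i j hi hin hj hjm h0 hav => ?_⟩
  refine hA.2 (m + 1 - j) (n + 1 - i) (by omega) (by omega) (by omega) (by omega) h0
    (hav.of_le_antiTranspose fun r c hr hrm hc hcn h => ?_)
  have hr' : m + 1 - (m + 1 - r) = r := by omega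
  have hc' : n + 1 - (n + 1 - c) = c := by omega
  simp only [_root_.antiTranspose, setOne, hr', hc'] at h ⊢
  split_ifs at h ⊢ <;> first | rfl | omega

open scoped Classical in
theorem MaximalAvoid312.one_lt_card_row (hA : MaximalAvoid312 m n A) (hm : 2 ≤ m) (hn : 2 ≤ n)
    {i : ℕ} (hi : 1 ≤ i) (him : i ≤ m) : 1 < #{j ∈ Icc 1 n | A i j = true} := by
  rw [one_lt_card]
  simp only [mem_filter, mem_Icc]
  by_cases h1 : i = 1
  · subst h1
    exact ⟨1, ⟨⟨le_rfl, by omega⟩, hA.apply_first_row (by omega) le_rfl (by omega) (by omega)⟩,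
      2, ⟨⟨by omega, hn⟩, hA.apply_first_row (by omega) (by omega) le_rfl hn⟩, by omega⟩
  by_cases hmi : i = m
  · subst hmi
    exact ⟨1, ⟨⟨le_rfl, by omega⟩, hA.apply_last_row (by omega) (by omega) (Or.inl rfl)⟩,
      n, ⟨⟨by omega, le_rfl⟩, hA.apply_last_row (by omega) (by omega) (Or.inr rfl)⟩, by omega⟩
  -- In the reflected matrix, row `i` becomes the interior column `m + 1 - i`, which contains
  -- two ones.
  obtain ⟨u, v, huv, huv_eq⟩ :=
    hA.antiTranspose.exists_interiorRows_eq_pair hn (c := m + 1 - i) (by omega) (by omega)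
  have hu : u ∈ ({u, v} : Finset ℕ) := mem_insert_self u {v}
  have hv : v ∈ ({u, v} : Finset ℕ) := mem_insert_of_mem (mem_singleton_self v)
  rw [← huv_eq, mem_filter, mem_Icc] at hu hv
  have hi' : m + 1 - (m + 1 - i) = i := by omega
  obtain ⟨⟨hu1, hun⟩, hAu, -⟩ := hu
  obtain ⟨⟨hv1, hvn⟩, hAv, -⟩ := hv
  simp only [_root_.antiTranspose, hi'] at hAu hAv
  exact ⟨n + 1 - u, ⟨⟨by omega, by omega⟩, hAu⟩, n + 1 - v, ⟨⟨by omega, by omega⟩, hAv⟩, by omega⟩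

theorem Finset.card_eq_card_filter_between_add_two {α : Type*} [LinearOrder α] {s : Finset α}
    (hs : 1 < #s) : #s = #{x ∈ s | (∃ a ∈ s, a < x) ∧ ∃ b ∈ s, x < b} + 2 := by
  have hne : s.Nonempty := card_pos.1 (by omega)
  have hlt := min'_lt_max'_of_card s hs
  have hbetween : {x ∈ s | (∃ a ∈ s, a < x) ∧ ∃ b ∈ s, x < b} =
      ((s.erase (s.min' hne)).erase (s.max' hne)) := by
    ext x
    simp only [mem_filter, mem_erase]
    constructor
    · rintro ⟨hx, ⟨a, ha, hax⟩, b, hb, hxb⟩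
      exact ⟨(hxb.trans_le (le_max' s b hb)).ne, (lt_of_le_of_lt (min'_le s a ha) hax).ne', hx⟩
    · rintro ⟨hmax, hmin, hx⟩
      exact ⟨hx, ⟨_, min'_mem s hne, lt_of_le_of_ne (min'_le s x hx) (Ne.symm hmin)⟩,
        _, max'_mem s hne, lt_of_le_of_ne (le_max' s x hx) hmax⟩
  rw [hbetween, card_erase_of_mem (mem_erase.2 ⟨hlt.ne', max'_mem s hne⟩),
    card_erase_of_mem (min'_mem s hne)]
  omega

open scoped Classical in
theorem card_row_eq_card_interiorOnes_add_two (i : ℕ)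
    (hrow : 1 < #{j ∈ Icc 1 n | A i j = true}) :
    #{j ∈ Icc 1 n | A i j = true} = #{c ∈ Icc 1 n | IsInteriorOne A n i c} + 2 := by
  rw [card_eq_card_filter_between_add_two hrow, filter_filter]
  congr 2
  refine filter_congr fun c hc => ?_
  rw [mem_Icc] at hc
  simp only [IsInteriorOne, HasOneLeft, HasOneRight, mem_filter, mem_Icc]
  constructor
  · rintro ⟨hic, ⟨a, ⟨⟨ha, -⟩, hia⟩, hac⟩, b, ⟨⟨-, hbn⟩, hib⟩, hcb⟩
    exact ⟨hic, ⟨a, ha, hac, hia⟩, b, hcb, hbn, hib⟩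
  · rintro ⟨hic, ⟨a, ha, hac, hia⟩, b, hcb, hbn, hib⟩
    exact ⟨hic, ⟨a, ⟨⟨ha, by omega⟩, hia⟩, hac⟩, b, ⟨⟨by omega, hbn⟩, hib⟩, hcb⟩

open scoped Classical in
theorem onesCount_eq_sum_rows (m n : ℕ) (A : ℕ → ℕ → Bool) :
    onesCount m n A = ∑ i ∈ Icc 1 m, #{j ∈ Icc 1 n | A i j = true} := by
  simp only [onesCount, card_filter, sum_product]

open scoped Classical in
theorem MaximalAvoid312.sum_card_interiorOnes (hA : MaximalAvoid312 m n A) (hm : 2 ≤ m) :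
    ∑ i ∈ Icc 1 m, #{c ∈ Icc 1 n | IsInteriorOne A n i c} = 2 * (n - 2) := by
  refine (sum_card_bipartiteAbove_eq_sum_card_bipartiteBelow
    (fun i c => IsInteriorOne A n i c)).trans ?_
  simp only [bipartiteBelow]
  have hcol : ∀ c ∈ Ioo 1 n, #{i ∈ Icc 1 m | IsInteriorOne A n i c} = 2 := fun c hc => by
    obtain ⟨u, v, huv, huv_eq⟩ :=
      hA.exists_interiorRows_eq_pair hm (mem_Ioo.1 hc).1 (mem_Ioo.1 hc).2
    rw [huv_eq, card_pair huv.ne]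
  have hborder : ∀ c ∈ Icc 1 n, c ∉ Ioo 1 n → #{i ∈ Icc 1 m | IsInteriorOne A n i c} = 0 :=
    fun c _ hc => card_eq_zero.2 <| filter_eq_empty_iff.2
      fun _ _ ⟨_, ⟨_, ha, hac, _⟩, _, hcb, hbn, _⟩ => hc (mem_Ioo.2 ⟨by omega, by omega⟩)
  rw [← sum_subset Ioo_subset_Icc_self hborder, sum_congr rfl hcol, sum_const, Nat.card_Ioo,
    smul_eq_mul]
  omega

theorem stmt_15 (m n : ℕ) (hm : 3 ≤ m) (hn : 3 ≤ n) (A : ℕ → ℕ → Bool)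
    (hA : MaximalAvoid312 m n A) : onesCount m n A = 2 * (m + n - 2) := by
  classical
  have hrows : ∀ i ∈ Icc 1 m,
      #{j ∈ Icc 1 n | A i j = true} = #{c ∈ Icc 1 n | IsInteriorOne A n i c} + 2 :=
    fun i hi => card_row_eq_card_interiorOnes_add_two i
      (hA.one_lt_card_row (by omega) (by omega) (mem_Icc.1 hi).1 (mem_Icc.1 hi).2)
  rw [onesCount_eq_sum_rows, sum_congr rfl hrows, sum_add_distrib,
    hA.sum_card_interiorOnes (by omega), sum_const, Nat.card_Icc, smul_eq_mul]
  omega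
end

section
/- For every n ≥ 1, there exist permutations σ₁, …, σₙ of {1, 2, …, n} such that (a) for every pair (i,j) with 1 ≤ i, j ≤ n there is exactly one index t with σ_t(i) = j (i.e. the corresponding permutation matrices sum to the n×n all-ones matrix J_n), and (b) each σ_t is both 123-avoiding and 312-avoiding. -/
/-- A permutation `σ` of `{0, …, n-1}` is 123-avoiding: there are no indices
`i < j < l` with `σ i < σ j < σ l`. -/
def Perm123Avoiding {n : ℕ} (σ : Equiv.Perm (Fin n)) : Prop :=
  ¬ ∃ i j l : Fin n, i < j ∧ j < l ∧ σ i < σ j ∧ σ j < σ l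

/-- A permutation `σ` of `{0, …, n-1}` is 312-avoiding: there are no indices
`i < j < l` with `σ j < σ l < σ i`. -/
def Perm312Avoiding {n : ℕ} (σ : Equiv.Perm (Fin n)) : Prop :=
  ¬ ∃ i j l : Fin n, i < j ∧ j < l ∧ σ j < σ l ∧ σ l < σ i

/-!
Take `σ_t(i) = t - i` in `ℤ/n`. For fixed `i` and `j` the only `t` with `σ_t(i) = j` is
`t = j + i`. Each `σ_t` lists `t, t-1, …, 0` and then `n-1, n-2, …, t+1`: two decreasing runs,
the second lying entirely above the first. So `σ_t` has a single ascent, at the wrap-around,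
which rules out a `123` pattern; and a `312` pattern would need its last two entries to form
that ascent, with its first entry in the lower run, hence below both.
-/

namespace Fin

theorem sub_lt_sub_iff_of_lt {n : ℕ} {t a b : Fin n} (hab : a < b) :
    t - a < t - b ↔ a ≤ t ∧ t < b := by
  have ht := t.isLt
  rcases le_or_gt a t with hat | hta
  · rcases le_or_gt b t with hbt | htb
    · rw [lt_def, sub_val_of_le hat, sub_val_of_le hbt]
      simp only [le_def, lt_def] at hab hat hbt ⊢
      omega
    · rw [lt_def, sub_val_of_le hat, coe_sub_iff_lt.mpr htb]
      simp only [le_def, lt_def] at hab hat htb ⊢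
      omega
  · rw [lt_def, coe_sub_iff_lt.mpr hta, coe_sub_iff_lt.mpr (hta.trans hab)]
    simp only [le_def, lt_def] at hab hta ⊢
    omega

variable {n : ℕ} [NeZero n]

theorem perm123Avoiding_subLeft (t : Fin n) : Perm123Avoiding (Equiv.subLeft t) := by
  rintro ⟨i, j, l, hij, hjl, hσij, hσjl⟩
  obtain ⟨-, htj⟩ := (sub_lt_sub_iff_of_lt hij).mp hσij
  obtain ⟨hjt, -⟩ := (sub_lt_sub_iff_of_lt hjl).mp hσjl
  exact htj.not_ge hjt

theorem perm312Avoiding_subLeft (t : Fin n) : Perm312Avoiding (Equiv.subLeft t) := by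
  rintro ⟨i, j, l, hij, hjl, hσjl, hσli⟩
  obtain ⟨hjt, htl⟩ := (sub_lt_sub_iff_of_lt hjl).mp hσjl
  have hσil : t - i < t - l := (sub_lt_sub_iff_of_lt (hij.trans hjl)).mpr ⟨hij.le.trans hjt, htl⟩
  exact hσil.not_gt hσli

theorem existsUnique_subLeft_apply_eq (i j : Fin n) : ∃! t : Fin n, Equiv.subLeft t i = j :=
  ⟨j + i, add_sub_cancel_right j i, fun _ ht => sub_eq_iff_eq_add.mp ht⟩

end Fin

theorem stmt_17 (n : ℕ) (hn : 1 ≤ n) :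
    ∃ σ : Fin n → Equiv.Perm (Fin n),
      (∀ i j : Fin n, ∃! t : Fin n, (σ t) i = j) ∧
      ∀ t : Fin n, Perm123Avoiding (σ t) ∧ Perm312Avoiding (σ t) := by
  have : NeZero n := ⟨Nat.one_le_iff_ne_zero.mp hn⟩
  exact ⟨Equiv.subLeft, Fin.existsUnique_subLeft_apply_eq,
    fun t => ⟨Fin.perm123Avoiding_subLeft t, Fin.perm312Avoiding_subLeft t⟩⟩
end
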